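/- arXiv:2303.15775 — 6 statements merged into one kernel-verified Lean document; each statement's English description precedes it below -/
import Mathlib

section
/- (Oscillation bounds for the velocity of a profile curve.) Let γ ∈ P, L := L[γ], and let (a,b) ⊆ [0,1] be an interval with γ₁(t) > 0 for all t ∈ (a,b). Then |γ̇₁(b) − γ̇₁(a)| ≤ (L/(2π)) ∫_a^b |k₁(t) k₂(t)|·2πL γ₁(t) dt and |γ̇₂(b) − γ̇₂(a)| ≤ √(L/(2π)) · (∫_a^b k₁(t)²·2πL γ₁(t) dt)^{1/2} · (∫_a^b γ̇₁(t)²/γ₁(t) dt)^{1/2}. -/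
open MeasureTheory Real Filter

noncomputable section

/-- First component of the velocity of a plane curve. -/
def d1 (γ : ℝ → ℝ × ℝ) (t : ℝ) : ℝ := (deriv γ t).1

/-- Second component of the velocity of a plane curve. -/
def d2 (γ : ℝ → ℝ × ℝ) (t : ℝ) : ℝ := (deriv γ t).2

/-- First component of the acceleration of a plane curve. -/
def dd1 (γ : ℝ → ℝ × ℝ) (t : ℝ) : ℝ := deriv (d1 γ) t

/-- Second component of the acceleration of a plane curve. -/
def dd2 (γ : ℝ → ℝ × ℝ) (t : ℝ) : ℝ := deriv (d2 γ) t

/-- Speed `|γ̇(t)|`. -/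
def speed (γ : ℝ → ℝ × ℝ) (t : ℝ) : ℝ := ‖deriv γ t‖

/-- Arc length `L[γ] = ∫₀¹ |γ̇(t)| dt`. -/
def arcLen (γ : ℝ → ℝ × ℝ) : ℝ := ∫ t in (0:ℝ)..1, speed γ t

/-- First principal curvature `k₁ = (γ̈₂γ̇₁ − γ̈₁γ̇₂)/|γ̇|³`. -/
def k1 (γ : ℝ → ℝ × ℝ) (t : ℝ) : ℝ :=
  (dd2 γ t * d1 γ t - dd1 γ t * d2 γ t) / (speed γ t) ^ 3

/-- Second principal curvature `k₂ = γ̇₂/(γ₁|γ̇|)`. -/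
def k2 (γ : ℝ → ℝ × ℝ) (t : ℝ) : ℝ := d2 γ t / ((γ t).1 * speed γ t)

/-- Willmore energy `W[γ] = (π/2)∫₀¹ (k₁+k₂)² γ₁ |γ̇| dt`. -/
def willmore (γ : ℝ → ℝ × ℝ) : ℝ :=
  (π / 2) * ∫ t in (0:ℝ)..1, (k1 γ t + k2 γ t) ^ 2 * (γ t).1 * speed γ t

/-- Area `A[γ] = 2π ∫₀¹ γ₁ |γ̇| dt`. -/
def area (γ : ℝ → ℝ × ℝ) : ℝ := (2 * π) * ∫ t in (0:ℝ)..1, (γ t).1 * speed γ t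

/-- Volume `V[γ] = π |∫₀¹ γ₁² γ̇₂ dt|`. -/
def vol (γ : ℝ → ℝ × ℝ) : ℝ := π * |∫ t in (0:ℝ)..1, ((γ t).1) ^ 2 * d2 γ t|

/-- The class `P` of admissible profile curves: `γ ∈ C¹([0,1]) ∩ W²²_loc((0,1))`,
mapping into the right half plane, with `γ₁(0) = γ₁(1) = 0`, `γ₁ > 0` on `(0,1)`,
parameterized proportional to arc length, and curvature bounded in `L²`. -/
structure IsProfileCurve (γ : ℝ → ℝ × ℝ) : Prop where
  diff : ∀ t ∈ Set.Icc (0:ℝ) 1, DifferentiableAt ℝ γ t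
  contDeriv : ContinuousOn (deriv γ) (Set.Icc (0:ℝ) 1)
  halfPlane : ∀ t ∈ Set.Icc (0:ℝ) 1, 0 ≤ (γ t).1
  end0 : (γ 0).1 = 0
  end1 : (γ 1).1 = 0
  posInterior : ∀ t ∈ Set.Ioo (0:ℝ) 1, 0 < (γ t).1
  arcPar : ∀ t ∈ Set.Icc (0:ℝ) 1, speed γ t = arcLen γ
  sobolevLoc : ∀ a b : ℝ, 0 < a → a ≤ b → b < 1 →
    MeasureTheory.IntegrableOn (fun t => (dd1 γ t) ^ 2 + (dd2 γ t) ^ 2) (Set.Icc a b) ∧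
    ∀ t ∈ Set.Icc a b,
      d1 γ t = d1 γ a + ∫ s in a..t, dd1 γ s ∧
      d2 γ t = d2 γ a + ∫ s in a..t, dd2 γ s
  curvL2 : MeasureTheory.IntegrableOn
    (fun t => ((k1 γ t) ^ 2 + (k2 γ t) ^ 2) * (2 * π) * (γ t).1 * speed γ t)
    (Set.Ioo (0:ℝ) 1)

/-- The constraint class `F_σ`: admissible profile curves with `A[γ] = 1` and
`V[γ] = σ/(6√π)`. -/
def memF (σ : ℝ) (γ : ℝ → ℝ × ℝ) : Prop :=
  IsProfileCurve γ ∧ area γ = 1 ∧ vol γ = σ / (6 * Real.sqrt π)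

/-- `β(σ) = inf {W[γ] : γ ∈ F_σ}`. -/
def betaFn (σ : ℝ) : ℝ := sInf (willmore '' {γ | memF σ γ})

/-- The normalized class `F_σ^{0+}`. -/
def memFplus (σ : ℝ) (γ : ℝ → ℝ × ℝ) : Prop :=
  memF σ γ ∧ γ 0 = (0, 0) ∧ 0 ≤ ∫ t in (0:ℝ)..1, (γ t).2

/-- Mean curvature `H = k₁ + k₂`. -/
def meanH (γ : ℝ → ℝ × ℝ) (t : ℝ) : ℝ := k1 γ t + k2 γ t

/-- Gauß curvature `K = k₁k₂`. -/
def gaussK (γ : ℝ → ℝ × ℝ) (t : ℝ) : ℝ := k1 γ t * k2 γ t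

/-- Laplace–Beltrami operator applied to the mean curvature:
`Δ_g H = (1/(γ₁ L²)) (γ₁ Ḣ)'`. -/
def lapH (γ : ℝ → ℝ × ℝ) (t : ℝ) : ℝ :=
  (1 / ((γ t).1 * (arcLen γ) ^ 2)) * deriv (fun s => (γ s).1 * deriv (meanH γ) s) t


/-!
`ℝ × ℝ` carries the sup norm, so `speed γ t = max |γ̇₁ t| |γ̇₂ t|`. For an arc-length parameterized
curve one velocity component therefore attains its extreme value `±L` at every interior time, and
its derivative vanishes there. If `γ̈₁ = 0`, then `k₁ = γ̈₂ γ̇₁ / L³` with `γ̇₁² = L²` gives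
`|γ̈₂| = L |k₁ γ̇₁|`; if `γ̈₂ = 0`, then `k₁ k₂ = -γ̈₁ / (L² γ₁)`. These pointwise bounds are
integrated over compact subintervals, using Cauchy–Schwarz for `γ̈₂`, and the endpoints are
reached by continuity of `γ̇` on `[0, 1]`.
-/

open Topology

theorem speed_eq_max_abs (γ : ℝ → ℝ × ℝ) (t : ℝ) : speed γ t = max |d1 γ t| |d2 γ t| := by
  simp [speed, d1, d2, Prod.norm_def, Real.norm_eq_abs]

theorem measurable_k1 (γ : ℝ → ℝ × ℝ) : Measurable (k1 γ) := by
  unfold k1 dd1 dd2 d1 d2 speed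
  fun_prop

theorem deriv_eq_zero_of_isLocalMax_abs {f : ℝ → ℝ} {t : ℝ}
    (h : IsLocalMax (fun s => |f s|) t) : deriv f t = 0 := by
  rcases le_total 0 (f t) with h0 | h0
  · refine IsLocalMax.deriv_eq_zero (Filter.Eventually.mono h fun s hs => ?_)
    exact (le_abs_self _).trans (hs.trans_eq (abs_of_nonneg h0))
  · refine IsLocalMin.deriv_eq_zero (Filter.Eventually.mono h fun s hs => ?_)
    linarith [neg_abs_le (f s), abs_of_nonpos h0, show |f s| ≤ |f t| from hs]

theorem IsClosed.sub_mem_of_forall_lt_lt {E : Type*} [NormedAddCommGroup E] {s : Set E}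
    (hs : IsClosed s) {f : ℝ → E} {a b : ℝ} (hab : a < b) (hf : ContinuousOn f (Set.Icc a b))
    (h : ∀ a' b', a < a' → a' ≤ b' → b' < b → f b' - f a' ∈ s) : f b - f a ∈ s := by
  have hinside : ∀ᶠ ε in 𝓝[>] (0 : ℝ), a + ε ∈ Set.Icc a b ∧ b - ε ∈ Set.Icc a b := by
    filter_upwards [Ioo_mem_nhdsGT (sub_pos.2 hab)] with ε hε
    exact ⟨⟨by linarith [hε.1], by linarith [hε.2]⟩, ⟨by linarith [hε.2], by linarith [hε.1]⟩⟩
  have hleft : Tendsto (fun ε => a + ε) (𝓝[>] 0) (𝓝[Set.Icc a b] a) :=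
    tendsto_nhdsWithin_iff.2 ⟨((continuous_const_add a).tendsto' 0 a (add_zero a)).mono_left
      nhdsWithin_le_nhds, hinside.mono fun _ => And.left⟩
  have hright : Tendsto (fun ε => b - ε) (𝓝[>] 0) (𝓝[Set.Icc a b] b) :=
    tendsto_nhdsWithin_iff.2 ⟨((continuous_sub_left b).tendsto' 0 b (sub_zero b)).mono_left
      nhdsWithin_le_nhds, hinside.mono fun _ => And.right⟩
  refine hs.mem_of_tendsto (((hf b (Set.right_mem_Icc.2 hab.le)).tendsto.comp hright).sub
    ((hf a (Set.left_mem_Icc.2 hab.le)).tendsto.comp hleft)) ?_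
  filter_upwards [Ioo_mem_nhdsGT (half_pos (sub_pos.2 hab))] with ε hε
  exact h _ _ (by linarith [hε.1]) (by linarith [hε.2]) (by linarith [hε.1])

theorem lintegral_ofReal_sqrt_mul_sqrt_le {α : Type*} [MeasurableSpace α] {μ : Measure α}
    {u v : α → ℝ} (hu : AEMeasurable u μ) (hv : AEMeasurable v μ) :
    ∫⁻ x, ENNReal.ofReal (√(u x) * √(v x)) ∂μ
      ≤ (∫⁻ x, ENNReal.ofReal (u x) ∂μ) ^ (1 / 2 : ℝ)
        * (∫⁻ x, ENNReal.ofReal (v x) ∂μ) ^ (1 / 2 : ℝ) := by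
  have hsq : ∀ y : ℝ, ENNReal.ofReal √y ^ (2 : ℝ) = ENNReal.ofReal y := fun y => by
    rw [ENNReal.ofReal_rpow_of_nonneg (Real.sqrt_nonneg _) zero_le_two, Real.rpow_two,
      Real.sq_sqrt', ENNReal.ofReal_max, ENNReal.ofReal_zero, max_eq_left zero_le]
  have := ENNReal.lintegral_mul_le_Lp_mul_Lq μ Real.HolderConjugate.two_two
    (f := fun x => ENNReal.ofReal √(u x)) (g := fun x => ENNReal.ofReal √(v x))
    (by fun_prop) (by fun_prop)
  simpa only [Pi.mul_apply, ← ENNReal.ofReal_mul (Real.sqrt_nonneg _), hsq] using this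

namespace IsProfileCurve

variable {γ : ℝ → ℝ × ℝ} {a b t : ℝ}

theorem continuousOn_d1 (hγ : IsProfileCurve γ) : ContinuousOn (d1 γ) (Set.Icc 0 1) :=
  continuous_fst.comp_continuousOn hγ.contDeriv

theorem continuousOn_d2 (hγ : IsProfileCurve γ) : ContinuousOn (d2 γ) (Set.Icc 0 1) :=
  continuous_snd.comp_continuousOn hγ.contDeriv

theorem continuousOn_fst (hγ : IsProfileCurve γ) :
    ContinuousOn (fun t => (γ t).1) (Set.Icc 0 1) :=
  continuous_fst.comp_continuousOn fun t ht => (hγ.diff t ht).continuousAt.continuousWithinAt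

theorem abs_d1_le_arcLen (hγ : IsProfileCurve γ) (ht : t ∈ Set.Icc 0 1) :
    |d1 γ t| ≤ arcLen γ :=
  hγ.arcPar t ht ▸ speed_eq_max_abs γ t ▸ le_max_left _ _

theorem abs_d2_le_arcLen (hγ : IsProfileCurve γ) (ht : t ∈ Set.Icc 0 1) :
    |d2 γ t| ≤ arcLen γ :=
  hγ.arcPar t ht ▸ speed_eq_max_abs γ t ▸ le_max_right _ _

theorem arcLen_pos (hγ : IsProfileCurve γ) : 0 < arcLen γ := by
  have h0 : (0 : ℝ) ∈ Set.Icc (0 : ℝ) 1 := Set.left_mem_Icc.2 zero_le_one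
  refine (hγ.arcPar 0 h0 ▸ norm_nonneg _ : 0 ≤ arcLen γ).lt_of_ne fun hL => ?_
  have hconst : ‖γ (1 / 2) - γ 0‖ ≤ 0 * ‖(1 / 2 : ℝ) - 0‖ :=
    Convex.norm_image_sub_le_of_norm_hasDerivWithin_le
      (fun x hx => (hγ.diff x hx).hasDerivAt.hasDerivWithinAt)
      (fun x hx => ((hγ.arcPar x hx).trans hL.symm).le) (convex_Icc 0 1) h0
      ⟨by norm_num, by norm_num⟩
  rw [zero_mul, norm_le_zero_iff, sub_eq_zero] at hconst
  have hmid := hγ.posInterior (1 / 2) ⟨by norm_num, by norm_num⟩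
  rw [hconst, hγ.end0] at hmid
  exact hmid.false

theorem dd1_eq_zero_or_dd2_eq_zero (hγ : IsProfileCurve γ) (ht : t ∈ Set.Ioo 0 1) :
    (dd1 γ t = 0 ∧ |d1 γ t| = arcLen γ) ∨ (dd2 γ t = 0 ∧ |d2 γ t| = arcLen γ) := by
  have hnhds : Set.Icc (0 : ℝ) 1 ∈ 𝓝 t := Icc_mem_nhds ht.1 ht.2
  have hmax : max |d1 γ t| |d2 γ t| = arcLen γ :=
    (speed_eq_max_abs γ t).symm.trans (hγ.arcPar t (Set.Ioo_subset_Icc_self ht))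
  rcases max_choice |d1 γ t| |d2 γ t| with h | h
  · have h1 : |d1 γ t| = arcLen γ := h ▸ hmax
    refine Or.inl ⟨deriv_eq_zero_of_isLocalMax_abs ?_, h1⟩
    filter_upwards [hnhds] with s hs using (hγ.abs_d1_le_arcLen hs).trans_eq h1.symm
  · have h2 : |d2 γ t| = arcLen γ := h ▸ hmax
    refine Or.inr ⟨deriv_eq_zero_of_isLocalMax_abs ?_, h2⟩
    filter_upwards [hnhds] with s hs using (hγ.abs_d2_le_arcLen hs).trans_eq h2.symm

theorem abs_dd1_le (hγ : IsProfileCurve γ) (ht : t ∈ Set.Ioo 0 1) :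
    |dd1 γ t| ≤ arcLen γ / (2 * π) * (|k1 γ t * k2 γ t| * (2 * π * arcLen γ * (γ t).1)) := by
  have hL := hγ.arcLen_pos
  have hγ₁ := hγ.posInterior t ht
  rcases hγ.dd1_eq_zero_or_dd2_eq_zero ht with ⟨h1, -⟩ | ⟨h2, hd2⟩
  · rw [h1, abs_zero]
    positivity
  · have hsq : d2 γ t ^ 2 = arcLen γ ^ 2 := by rw [← sq_abs, hd2]
    have hk : k1 γ t * k2 γ t = -dd1 γ t / (arcLen γ ^ 2 * (γ t).1) := by
      rw [k1, k2, hγ.arcPar t (Set.Ioo_subset_Icc_self ht), h2]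
      field_simp
      linear_combination (-dd1 γ t) * hsq
    rw [hk, abs_div, abs_neg, abs_of_pos (by positivity : 0 < arcLen γ ^ 2 * (γ t).1)]
    apply le_of_eq
    field_simp

theorem abs_dd2_le (hγ : IsProfileCurve γ) (ht : t ∈ Set.Ioo 0 1) :
    |dd2 γ t| ≤ √(arcLen γ / (2 * π))
      * (√(k1 γ t ^ 2 * (2 * π * arcLen γ * (γ t).1)) * √(d1 γ t ^ 2 / (γ t).1)) := by
  have hL := hγ.arcLen_pos
  have hγ₁ := hγ.posInterior t ht
  rcases hγ.dd1_eq_zero_or_dd2_eq_zero ht with ⟨h1, hd1⟩ | ⟨h2, -⟩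
  · have hsq : d1 γ t ^ 2 = arcLen γ ^ 2 := by rw [← sq_abs, hd1]
    have hk : arcLen γ * k1 γ t * d1 γ t = dd2 γ t := by
      rw [k1, hγ.arcPar t (Set.Ioo_subset_Icc_self ht), h1]
      field_simp
      linear_combination dd2 γ t * hsq
    rw [← Real.sqrt_mul (by positivity), ← Real.sqrt_mul (by positivity), ← hk,
      ← Real.sqrt_sq_eq_abs]
    apply le_of_eq
    congr 1
    field_simp
  · rw [h2, abs_zero]
    positivity

theorem integrableOn_abs_k1_mul_k2 (hγ : IsProfileCurve γ) :
    IntegrableOn (fun t => |k1 γ t * k2 γ t| * (2 * π * arcLen γ * (γ t).1)) (Set.Ioo 0 1) := by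
  have hγ₁ : AEMeasurable (fun t => (γ t).1) (volume.restrict (Set.Ioo 0 1)) :=
    (hγ.continuousOn_fst.mono Set.Ioo_subset_Icc_self).aemeasurable measurableSet_Ioo
  have hk1 := measurable_k1 γ
  refine hγ.curvL2.mono' ?_ ?_
  · refine AEMeasurable.aestronglyMeasurable ?_
    unfold k2 d2 speed
    fun_prop
  · filter_upwards [ae_restrict_mem measurableSet_Ioo] with t ht
    have hL := hγ.arcLen_pos
    have hγ₁t := hγ.posInterior t ht
    have hk : |k1 γ t * k2 γ t| ≤ k1 γ t ^ 2 + k2 γ t ^ 2 := by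
      rw [abs_mul]
      nlinarith [two_mul_le_add_sq |k1 γ t| |k2 γ t|, sq_abs (k1 γ t), sq_abs (k2 γ t),
        mul_nonneg (abs_nonneg (k1 γ t)) (abs_nonneg (k2 γ t))]
    rw [hγ.arcPar t (Set.Ioo_subset_Icc_self ht), Real.norm_eq_abs, abs_of_nonneg (by positivity)]
    calc |k1 γ t * k2 γ t| * (2 * π * arcLen γ * (γ t).1)
        ≤ (k1 γ t ^ 2 + k2 γ t ^ 2) * (2 * π * arcLen γ * (γ t).1) := by gcongr
      _ = _ := by ring

theorem d1_sub_eq_integral (hγ : IsProfileCurve γ) (ha : 0 < a) (hab : a ≤ b) (hb : b < 1) :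
    d1 γ b - d1 γ a = ∫ t in a..b, dd1 γ t := by
  rw [((hγ.sobolevLoc a b ha hab hb).2 b ⟨hab, le_rfl⟩).1]
  ring

theorem d2_sub_eq_integral (hγ : IsProfileCurve γ) (ha : 0 < a) (hab : a ≤ b) (hb : b < 1) :
    d2 γ b - d2 γ a = ∫ t in a..b, dd2 γ t := by
  rw [((hγ.sobolevLoc a b ha hab hb).2 b ⟨hab, le_rfl⟩).2]
  ring

theorem abs_d1_sub_le_of_lt (hγ : IsProfileCurve γ) (ha : 0 ≤ a) (hb : b ≤ 1) {a' b' : ℝ}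
    (haa' : a < a') (hab' : a' ≤ b') (hbb' : b' < b) :
    |d1 γ b' - d1 γ a'| ≤ arcLen γ / (2 * π) *
      ∫ t in a..b, |k1 γ t * k2 γ t| * (2 * π * arcLen γ * (γ t).1) := by
  have hL := hγ.arcLen_pos
  have hint : IntervalIntegrable
      (fun t => arcLen γ / (2 * π) * (|k1 γ t * k2 γ t| * (2 * π * arcLen γ * (γ t).1)))
      volume a b :=
    ((intervalIntegrable_iff_integrableOn_Ioo_of_le ((haa'.trans_le hab').trans hbb').le).2
      (hγ.integrableOn_abs_k1_mul_k2.mono_set (Set.Ioo_subset_Ioo ha hb))).const_mul _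
  rw [← intervalIntegral.integral_const_mul]
  calc |d1 γ b' - d1 γ a'| = ‖∫ t in a'..b', dd1 γ t‖ := by
        rw [hγ.d1_sub_eq_integral (ha.trans_lt haa') hab' (hbb'.trans_le hb), Real.norm_eq_abs]
    _ ≤ ∫ t in a'..b', arcLen γ / (2 * π) * (|k1 γ t * k2 γ t| * (2 * π * arcLen γ * (γ t).1)) :=
        intervalIntegral.norm_integral_le_of_norm_le hab'
          (ae_of_all _ fun t ht => hγ.abs_dd1_le
            ⟨(ha.trans_lt haa').trans ht.1, ht.2.trans_lt (hbb'.trans_le hb)⟩)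
          (hint.mono_set (Set.uIcc_subset_uIcc
            (Set.mem_uIcc_of_le haa'.le (hab'.trans hbb'.le))
            (Set.mem_uIcc_of_le (haa'.le.trans hab') hbb'.le)))
    _ ≤ _ := by
        refine intervalIntegral.integral_mono_interval haa'.le hab' hbb'.le ?_ hint
        refine ae_restrict_of_forall_mem measurableSet_Ioc fun t ht => ?_
        have := hγ.halfPlane t ⟨ha.trans ht.1.le, ht.2.trans hb⟩
        positivity

theorem ofReal_abs_d2_sub_le_of_lt (hγ : IsProfileCurve γ) (ha : 0 ≤ a) (hb : b ≤ 1)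
    {a' b' : ℝ} (haa' : a < a') (hab' : a' ≤ b') (hbb' : b' < b) :
    ENNReal.ofReal |d2 γ b' - d2 γ a'|
      ≤ ENNReal.ofReal √(arcLen γ / (2 * π))
        * (∫⁻ t in Set.Ioo a b,
            ENNReal.ofReal (k1 γ t ^ 2 * (2 * π * arcLen γ * (γ t).1))) ^ (1 / 2 : ℝ)
        * (∫⁻ t in Set.Ioo a b, ENNReal.ofReal (d1 γ t ^ 2 / (γ t).1)) ^ (1 / 2 : ℝ) := by
  have hsub : Set.Ioo a b ⊆ Set.Ioo 0 1 := Set.Ioo_subset_Ioo ha hb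
  have hγ₁ : AEMeasurable (fun t => (γ t).1) (volume.restrict (Set.Ioo a b)) :=
    (hγ.continuousOn_fst.mono (hsub.trans Set.Ioo_subset_Icc_self)).aemeasurable
      measurableSet_Ioo
  have hk1 := measurable_k1 γ
  calc ENNReal.ofReal |d2 γ b' - d2 γ a'| = ‖∫ t in Set.Ioc a' b', dd2 γ t‖ₑ := by
        rw [hγ.d2_sub_eq_integral (ha.trans_lt haa') hab' (hbb'.trans_le hb),
          intervalIntegral.integral_of_le hab', Real.enorm_eq_ofReal_abs]
    _ ≤ ∫⁻ t in Set.Ioc a' b', ‖dd2 γ t‖ₑ := enorm_integral_le_lintegral_enorm _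
    _ ≤ ∫⁻ t in Set.Ioo a b, ‖dd2 γ t‖ₑ :=
        lintegral_mono_set fun t ht => ⟨haa'.trans ht.1, ht.2.trans_lt hbb'⟩
    _ ≤ ∫⁻ t in Set.Ioo a b, ENNReal.ofReal √(arcLen γ / (2 * π)) * ENNReal.ofReal
          (√(k1 γ t ^ 2 * (2 * π * arcLen γ * (γ t).1)) * √(d1 γ t ^ 2 / (γ t).1)) := by
        refine setLIntegral_mono' measurableSet_Ioo fun t ht => ?_
        rw [Real.enorm_eq_ofReal_abs, ← ENNReal.ofReal_mul (Real.sqrt_nonneg _)]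
        exact ENNReal.ofReal_le_ofReal (hγ.abs_dd2_le (hsub ht))
    _ = ENNReal.ofReal √(arcLen γ / (2 * π)) * ∫⁻ t in Set.Ioo a b, ENNReal.ofReal
          (√(k1 γ t ^ 2 * (2 * π * arcLen γ * (γ t).1)) * √(d1 γ t ^ 2 / (γ t).1)) :=
        lintegral_const_mul' _ _ ENNReal.ofReal_ne_top
    _ ≤ _ := by
        refine (mul_le_mul_right ?_ _).trans_eq (mul_assoc _ _ _).symm
        unfold d1
        exact lintegral_ofReal_sqrt_mul_sqrt_le (by fun_prop) (by fun_prop)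

end IsProfileCurve

theorem velocity_oscillation_bounds_general (γ : ℝ → ℝ × ℝ) (hγ : IsProfileCurve γ)
    (a b : ℝ) (ha : 0 ≤ a) (hab : a < b) (hb : b ≤ 1) :
    |d1 γ b - d1 γ a|
      ≤ arcLen γ / (2 * π) *
          ∫ t in a..b, |k1 γ t * k2 γ t| * (2 * π * arcLen γ * (γ t).1) ∧
    ENNReal.ofReal |d2 γ b - d2 γ a|
      ≤ ENNReal.ofReal (Real.sqrt (arcLen γ / (2 * π)))
          * (∫⁻ t in Set.Ioo a b,
              ENNReal.ofReal ((k1 γ t) ^ 2 * (2 * π * arcLen γ * (γ t).1))) ^ (1/2 : ℝ)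
          * (∫⁻ t in Set.Ioo a b,
              ENNReal.ofReal ((d1 γ t) ^ 2 / (γ t).1)) ^ (1/2 : ℝ) := by
  have hIcc : Set.Icc a b ⊆ Set.Icc 0 1 := Set.Icc_subset_Icc ha hb
  constructor
  · exact (isClosed_le continuous_abs continuous_const).sub_mem_of_forall_lt_lt hab
      (hγ.continuousOn_d1.mono hIcc) fun a' b' => hγ.abs_d1_sub_le_of_lt ha hb
  · exact (isClosed_le (ENNReal.continuous_ofReal.comp continuous_abs) continuous_const
      ).sub_mem_of_forall_lt_lt hab (hγ.continuousOn_d2.mono hIcc)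
      fun a' b' => hγ.ofReal_abs_d2_sub_le_of_lt ha hb

/-- **Oscillation bounds for the velocity of a profile curve.** -/
theorem velocity_oscillation_bounds (γ : ℝ → ℝ × ℝ) (hγ : IsProfileCurve γ)
    (a b : ℝ) (ha : 0 ≤ a) (hab : a < b) (hb : b ≤ 1)
    (hpos : ∀ t ∈ Set.Ioo a b, 0 < (γ t).1) :
    |d1 γ b - d1 γ a|
      ≤ arcLen γ / (2 * π) *
          ∫ t in a..b, |k1 γ t * k2 γ t| * (2 * π * arcLen γ * (γ t).1) ∧
    ENNReal.ofReal |d2 γ b - d2 γ a|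
      ≤ ENNReal.ofReal (Real.sqrt (arcLen γ / (2 * π)))
          * (∫⁻ t in Set.Ioo a b,
              ENNReal.ofReal ((k1 γ t) ^ 2 * (2 * π * arcLen γ * (γ t).1))) ^ (1/2 : ℝ)
          * (∫⁻ t in Set.Ioo a b,
              ENNReal.ofReal ((d1 γ t) ^ 2 / (γ t).1)) ^ (1/2 : ℝ) :=
  velocity_oscillation_bounds_general γ hγ a b ha hab hb

end
end

section
/- (Weighted lower semicontinuity.) Let ρ_n, ρ ∈ C⁰([0,1]) be nonnegative and let f_n, f : [0,1] → ℝ be measurable. Assume ρ_n → ρ uniformly on [0,1], f_n ρ_n → f ρ weakly in L¹((0,1)), f²ρ ∈ L¹((0,1)), and there is C < ∞ with ‖f_n² ρ_n‖_{L¹((0,1))} ≤ C for all n. Then ∫₀¹ f(t)² ρ(t) dt ≤ liminf_{n→∞} ∫₀¹ f_n(t)² ρ_n(t) dt. -/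
/-!
For a bounded test function `φ`, expanding `(f_n - φ)² ρ_n ≥ 0` gives
`∫ f_n² ρ_n ≥ 2 ∫ f_n ρ_n φ - ∫ φ² ρ_n`. The right-hand side converges to `2 ∫ f ρ φ - ∫ φ² ρ`
by weak convergence and uniform convergence of the weights, so this quantity is a lower bound for
the liminf. Taking for `φ` the truncations `f 𝟙_{|f| ≤ m}` turns it into `∫_{|f| ≤ m} f² ρ`,
which tends to `∫ f² ρ` as `m → ∞`.
-/

open MeasureTheory Filter Set Topology

theorem le_liminf_of_tendsto_of_le {ι β : Type*} [ConditionallyCompleteLinearOrder β]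
    [TopologicalSpace β] [OrderTopology β] {l : Filter ι} [l.NeBot] {u v : ι → β} {a : β}
    (hu : Tendsto u l (𝓝 a)) (huv : ∀ᶠ i in l, u i ≤ v i) (hv : IsBoundedUnder (· ≤ ·) l v) :
    a ≤ liminf v l :=
  hu.liminf_eq ▸ liminf_le_liminf huv hu.isBoundedUnder_ge hv.isCoboundedUnder_ge

section WeightedL2

variable {α : Type*} [MeasurableSpace α] {μ : Measure α}

theorem integrable_mul_of_sq_mul {g w : α → ℝ} (hw0 : ∀ᵐ x ∂μ, 0 ≤ w x) (hw : Integrable w μ)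
    (hgw : Integrable (fun x => g x ^ 2 * w x) μ) (hg : AEStronglyMeasurable g μ) :
    Integrable (fun x => g x * w x) μ := by
  refine ((hw.add hgw).div_const 2).mono' (hg.mul hw.1) ?_
  filter_upwards [hw0] with x hx
  rw [Real.norm_eq_abs, abs_mul, abs_of_nonneg hx]
  simp only [Pi.add_apply]
  nlinarith [sq_abs (g x), mul_nonneg (sq_nonneg (|g x| - 1)) hx]

theorem two_mul_integral_sub_integral_sq_mul_le {g w φ : α → ℝ} {B : ℝ}
    (hw0 : ∀ᵐ x ∂μ, 0 ≤ w x) (hw : Integrable w μ)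
    (hgw : Integrable (fun x => g x ^ 2 * w x) μ) (hg : AEStronglyMeasurable g μ)
    (hφ : AEStronglyMeasurable φ μ) (hφB : ∀ᵐ x ∂μ, |φ x| ≤ B) :
    2 * ∫ x, g x * w x * φ x ∂μ - ∫ x, φ x ^ 2 * w x ∂μ ≤ ∫ x, g x ^ 2 * w x ∂μ := by
  have hgwφ : Integrable (fun x => g x * w x * φ x) μ :=
    (integrable_mul_of_sq_mul hw0 hw hgw hg).mul_bdd hφ hφB
  have hφw : Integrable (fun x => φ x ^ 2 * w x) μ := by
    refine hw.bdd_mul (hφ.pow 2) (c := B ^ 2) ?_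
    filter_upwards [hφB] with x hx
    rw [norm_pow, Real.norm_eq_abs]
    exact pow_le_pow_left₀ (abs_nonneg _) hx 2
  calc 2 * ∫ x, g x * w x * φ x ∂μ - ∫ x, φ x ^ 2 * w x ∂μ
      = ∫ x, (2 * (g x * w x * φ x) - φ x ^ 2 * w x) ∂μ := by
        rw [integral_sub (hgwφ.const_mul 2) hφw, integral_const_mul]
    _ ≤ ∫ x, g x ^ 2 * w x ∂μ := by
        refine integral_mono_ae ((hgwφ.const_mul 2).sub hφw) hgw ?_
        filter_upwards [hw0] with x hx
        nlinarith [mul_nonneg (sq_nonneg (g x - φ x)) hx]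

theorem tendsto_integral_mul_of_tendstoUniformlyOn [IsFiniteMeasure μ] {ι : Type*}
    {l : Filter ι} [l.IsCountablyGenerated] {F : ι → α → ℝ} {g ψ : α → ℝ} {s : Set α} {B : ℝ}
    (hs : ∀ᵐ x ∂μ, x ∈ s) (hF : TendstoUniformlyOn F g l s)
    (hFm : ∀ i, AEStronglyMeasurable (F i) μ) (hg : Integrable g μ)
    (hψ : AEStronglyMeasurable ψ μ) (hψB : ∀ᵐ x ∂μ, |ψ x| ≤ B) :
    Tendsto (fun i => ∫ x, ψ x * F i x ∂μ) l (𝓝 (∫ x, ψ x * g x ∂μ)) := by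
  refine tendsto_integral_filter_of_dominated_convergence (fun x => B * (|g x| + 1))
    (Eventually.of_forall fun i => hψ.mul (hFm i)) ?_
    ((hg.abs.add (integrable_const 1)).const_mul B)
    (hs.mono fun x hx => (hF.tendsto_at hx).const_mul (ψ x))
  filter_upwards [Metric.tendstoUniformlyOn_iff.mp hF 1 one_pos] with i hi
  filter_upwards [hs, hψB] with x hxs hxB
  have hFg : |F i x| ≤ |g x| + 1 := by
    have := hi x hxs
    rw [Real.dist_eq] at this
    linarith [abs_sub_abs_le_abs_sub (F i x) (g x), abs_sub_comm (g x) (F i x)]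
  rw [Real.norm_eq_abs, abs_mul]
  exact mul_le_mul hxB hFg (abs_nonneg _) ((abs_nonneg _).trans hxB)

theorem integral_sq_mul_le_of_forall_bounded {f w : α → ℝ} {L : ℝ} (hf : Measurable f)
    (hfw : Integrable (fun x => f x ^ 2 * w x) μ)
    (h : ∀ φ : α → ℝ, Measurable φ → (∃ B, ∀ x, |φ x| ≤ B) →
      2 * ∫ x, f x * w x * φ x ∂μ - ∫ x, φ x ^ 2 * w x ∂μ ≤ L) :
    ∫ x, f x ^ 2 * w x ∂μ ≤ L := by
  set s : ℕ → Set α := fun m => {x | |f x| ≤ m}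
  have hs : ∀ m, MeasurableSet (s m) := fun m => measurableSet_le hf.abs measurable_const
  have hs_mono : Monotone s := fun m m' hm x (hx : |f x| ≤ m) => hx.trans (Nat.cast_le.mpr hm)
  have hs_union : ⋃ m, s m = univ :=
    eq_univ_of_forall fun x => mem_iUnion.2 ⟨⌈|f x|⌉₊, show |f x| ≤ _ from Nat.le_ceil _⟩
  have hlim := tendsto_setIntegral_of_monotone hs hs_mono hfw.integrableOn
  rw [hs_union, Measure.restrict_univ] at hlim
  refine le_of_tendsto' hlim fun m => ?_
  set φ := (s m).indicator f
  have hφ_sq : ∀ x, φ x ^ 2 * w x = (s m).indicator (fun x => f x ^ 2 * w x) x := by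
    intro x
    by_cases hx : x ∈ s m <;> simp [φ, hx]
  have hfφ : ∀ x, f x * w x * φ x = φ x ^ 2 * w x := by
    intro x
    by_cases hx : x ∈ s m
    · simp only [φ, indicator_of_mem hx]; ring
    · simp [φ, hx]
  have hφB : ∀ x, |φ x| ≤ m := by
    intro x
    by_cases hx : x ∈ s m
    · simp only [φ, indicator_of_mem hx]; exact hx
    · simp [φ, hx]
  have hφ := h φ (hf.indicator (hs m)) ⟨m, hφB⟩
  simp only [hfφ, hφ_sq, integral_indicator (hs m)] at hφ
  linarith

end WeightedL2

theorem weighted_lower_semicontinuity_general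
    (ρn : ℕ → ℝ → ℝ) (ρ : ℝ → ℝ) (fn : ℕ → ℝ → ℝ) (f : ℝ → ℝ)
    (hρnc : ∀ n, ContinuousOn (ρn n) (Set.Icc (0:ℝ) 1))
    (hρnn : ∀ n, ∀ t ∈ Set.Icc (0:ℝ) 1, 0 ≤ ρn n t)
    (hfm : Measurable f) (hfnm : ∀ n, Measurable (fn n))
    (hunif : TendstoUniformlyOn ρn ρ atTop (Set.Icc (0:ℝ) 1))
    (hweak : ∀ φ : ℝ → ℝ, Measurable φ → (∃ C : ℝ, ∀ t, |φ t| ≤ C) →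
      Tendsto (fun n => ∫ t in Set.Ioo (0:ℝ) 1, fn n t * ρn n t * φ t) atTop
        (nhds (∫ t in Set.Ioo (0:ℝ) 1, f t * ρ t * φ t)))
    (hint : MeasureTheory.IntegrableOn (fun t => (f t) ^ 2 * ρ t) (Set.Ioo (0:ℝ) 1))
    (C : ℝ)
    (hbd : ∀ n, MeasureTheory.IntegrableOn
        (fun t => (fn n t) ^ 2 * ρn n t) (Set.Ioo (0:ℝ) 1) ∧
      (∫ t in Set.Ioo (0:ℝ) 1, (fn n t) ^ 2 * ρn n t) ≤ C) :
    (∫ t in Set.Ioo (0:ℝ) 1, (f t) ^ 2 * ρ t)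
      ≤ Filter.liminf (fun n => ∫ t in Set.Ioo (0:ℝ) 1, (fn n t) ^ 2 * ρn n t) atTop := by
  have hρc : ContinuousOn ρ (Icc 0 1) := hunif.continuousOn (Frequently.of_forall hρnc)
  have hρn_int : ∀ n, IntegrableOn (ρn n) (Ioo 0 1) :=
    fun n => (hρnc n).integrableOn_Icc.mono_set Ioo_subset_Icc_self
  have hρn0 : ∀ n, ∀ᵐ t ∂volume.restrict (Ioo (0:ℝ) 1), 0 ≤ ρn n t := fun n =>
    ae_restrict_of_forall_mem measurableSet_Ioo fun t ht => hρnn n t (Ioo_subset_Icc_self ht)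
  have hρ_int : IntegrableOn ρ (Ioo 0 1) := hρc.integrableOn_Icc.mono_set Ioo_subset_Icc_self
  refine integral_sq_mul_le_of_forall_bounded hfm hint fun φ hφm ⟨B, hφB⟩ => ?_
  have hφ2 : ∀ t, |φ t ^ 2| ≤ B ^ 2 := fun t => by
    rw [abs_pow]; exact pow_le_pow_left₀ (abs_nonneg _) (hφB t) 2
  have hlim : Tendsto (fun n => 2 * (∫ t in Ioo 0 1, fn n t * ρn n t * φ t) -
      ∫ t in Ioo 0 1, φ t ^ 2 * ρn n t) atTop
      (𝓝 (2 * (∫ t in Ioo 0 1, f t * ρ t * φ t) - ∫ t in Ioo 0 1, φ t ^ 2 * ρ t)) :=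
    ((hweak φ hφm ⟨B, hφB⟩).const_mul 2).sub <|
      tendsto_integral_mul_of_tendstoUniformlyOn (ψ := fun t => φ t ^ 2)
        (ae_restrict_of_forall_mem measurableSet_Ioo fun _ ht => Ioo_subset_Icc_self ht) hunif
        (fun n => (hρn_int n).1) hρ_int (hφm.pow_const 2).aestronglyMeasurable
        (Eventually.of_forall hφ2)
  exact le_liminf_of_tendsto_of_le hlim (Eventually.of_forall fun n =>
    two_mul_integral_sub_integral_sq_mul_le (hρn0 n) (hρn_int n) (hbd n).1
      (hfnm n).aestronglyMeasurable hφm.aestronglyMeasurable (Eventually.of_forall hφB))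
    (isBoundedUnder_of ⟨C, fun n => (hbd n).2⟩)

/-- **Weighted lower semicontinuity.** If `ρ_n → ρ` uniformly on `[0,1]` with `ρ_n, ρ`
continuous and nonnegative, `f_n ρ_n → f ρ` weakly in `L¹((0,1))`, `f²ρ ∈ L¹((0,1))` and
`‖f_n² ρ_n‖_{L¹((0,1))} ≤ C`, then `∫₀¹ f²ρ ≤ liminf ∫₀¹ f_n²ρ_n`. -/
theorem weighted_lower_semicontinuity
    (ρn : ℕ → ℝ → ℝ) (ρ : ℝ → ℝ) (fn : ℕ → ℝ → ℝ) (f : ℝ → ℝ)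
    (hρnc : ∀ n, ContinuousOn (ρn n) (Set.Icc (0:ℝ) 1))
    (hρc : ContinuousOn ρ (Set.Icc (0:ℝ) 1))
    (hρnn : ∀ n, ∀ t ∈ Set.Icc (0:ℝ) 1, 0 ≤ ρn n t)
    (hρ0 : ∀ t ∈ Set.Icc (0:ℝ) 1, 0 ≤ ρ t)
    (hfm : Measurable f) (hfnm : ∀ n, Measurable (fn n))
    (hunif : TendstoUniformlyOn ρn ρ atTop (Set.Icc (0:ℝ) 1))
    (hweak : ∀ φ : ℝ → ℝ, Measurable φ → (∃ C : ℝ, ∀ t, |φ t| ≤ C) →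
      Tendsto (fun n => ∫ t in Set.Ioo (0:ℝ) 1, fn n t * ρn n t * φ t) atTop
        (nhds (∫ t in Set.Ioo (0:ℝ) 1, f t * ρ t * φ t)))
    (hint : MeasureTheory.IntegrableOn (fun t => (f t) ^ 2 * ρ t) (Set.Ioo (0:ℝ) 1))
    (C : ℝ)
    (hbd : ∀ n, MeasureTheory.IntegrableOn
        (fun t => (fn n t) ^ 2 * ρn n t) (Set.Ioo (0:ℝ) 1) ∧
      (∫ t in Set.Ioo (0:ℝ) 1, (fn n t) ^ 2 * ρn n t) ≤ C) :
    (∫ t in Set.Ioo (0:ℝ) 1, (f t) ^ 2 * ρ t)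
      ≤ Filter.liminf (fun n => ∫ t in Set.Ioo (0:ℝ) 1, (fn n t) ^ 2 * ρn n t) atTop :=
  weighted_lower_semicontinuity_general ρn ρ fn f hρnc hρnn hfm hfnm hunif hweak hint C hbd
end

section
/- (BV compactness in L¹.) Let α < β be real numbers and let (f_n) be a sequence of measurable functions f_n : [α,β] → ℝ with f_n ∈ L¹((α,β)) and total variation V_α^β(f_n) < ∞ such that sup_n (‖f_n‖_{L¹((α,β))} + V_α^β(f_n)) < ∞. Then there exist a function f : [α,β] → ℝ of bounded variation with f ∈ L¹((α,β)) and a subsequence (f_{n_a}) such that f_{n_a} → f pointwise on [α,β] and f_{n_a} → f in L¹((α,β)). -/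
/-!
Each `fₙ` is uniformly bounded on `[α, β]`: it differs from its mean by at most its variation.
By the Jordan decomposition `fₙ = pₙ - (pₙ - fₙ)` with `pₙ x = V_α^x(fₙ)`, both parts being
monotone and uniformly bounded, so Helly's selection theorem for monotone functions gives a
pointwise convergent subsequence. Helly's theorem itself is a diagonal argument: extract on the
rationals, extend the limit to a monotone `G`, squeeze `fₙ x` between rational points at the
continuity points of `G`, and extract once more on the countably many remaining points.
The limit has bounded variation because variation is lower semicontinuous under pointwise
convergence, and `L¹` convergence is dominated convergence with a constant bound.
-/

open MeasureTheory Filter Set Topology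
open scoped ENNReal

theorem exists_subseq_tendsto_of_countable {α : Type*} {s : Set α} (hs : s.Countable)
    {g : ℕ → α → ℝ} {M : ℝ} (hbdd : ∀ n, ∀ x ∈ s, |g n x| ≤ M) :
    ∃ φ : ℕ → ℕ, StrictMono φ ∧ ∀ x ∈ s, ∃ l, Tendsto (fun n => g (φ n) x) atTop (𝓝 l) := by
  have : Countable s := hs.to_subtype
  have hK : IsCompact (univ.pi fun _ : s => Icc (-M) M) := isCompact_univ_pi fun _ => isCompact_Icc
  obtain ⟨l, -, φ, hφ, hlim⟩ :=
    hK.tendsto_subseq (x := fun n (y : s) => g n y) fun n y _ => abs_le.1 (hbdd n y y.2)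
  exact ⟨φ, hφ, fun x hx => ⟨l ⟨x, hx⟩, tendsto_pi_nhds.1 hlim ⟨x, hx⟩⟩⟩

theorem tendsto_of_monotoneOn_of_continuousAt {α β : Type*} [TopologicalSpace α] [Preorder α]
    [TopologicalSpace β] [LinearOrder β] [OrderTopology β] {s D : Set α} {g : ℕ → α → β}
    {G : α → β} (hmono : ∀ n, MonotoneOn (g n) s) (hDs : D ⊆ s)
    (hD : ∀ d ∈ D, Tendsto (fun n => g n d) atTop (𝓝 (G d))) {x : α} (hx : x ∈ s)
    (hG : ContinuousAt G x) (hleft : x ∈ closure (D ∩ Iic x))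
    (hright : x ∈ closure (D ∩ Ici x)) :
    Tendsto (fun n => g n x) atTop (𝓝 (G x)) := by
  refine tendsto_order.2 ⟨fun c hc => ?_, fun c hc => ?_⟩
  · obtain ⟨d, hdG, hdD, hdx⟩ :=
      mem_closure_iff_nhds.1 hleft _ (hG.eventually (lt_mem_nhds hc))
    filter_upwards [(hD d hdD).eventually (lt_mem_nhds hdG)] with n hn
    exact hn.trans_le (hmono n (hDs hdD) hx hdx)
  · obtain ⟨d, hdG, hdD, hxd⟩ :=
      mem_closure_iff_nhds.1 hright _ (hG.eventually (gt_mem_nhds hc))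
    filter_upwards [(hD d hdD).eventually (gt_mem_nhds hdG)] with n hn
    exact (hmono n hx (hDs hdD) hxd).trans_lt hn

section DenseInIoo

variable {a b x : ℝ} {Q : Set ℝ}

theorem Dense.mem_closure_Ioo_inter_Iic (hQ : Dense Q) (hx : x ∈ Ioo a b) :
    x ∈ closure (Ioo a b ∩ Q ∩ Iic x) := by
  refine closure_minimal
    ((hQ.open_subset_closure_inter (isOpen_Ioo (a := a) (b := x))).trans (closure_mono ?_))
    isClosed_closure (by rw [closure_Ioo hx.1.ne]; exact ⟨hx.1.le, le_rfl⟩)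
  exact fun y ⟨⟨hay, hyx⟩, hy⟩ => ⟨⟨⟨hay, hyx.trans hx.2⟩, hy⟩, hyx.le⟩

theorem Dense.mem_closure_Ioo_inter_Ici (hQ : Dense Q) (hx : x ∈ Ioo a b) :
    x ∈ closure (Ioo a b ∩ Q ∩ Ici x) := by
  refine closure_minimal
    ((hQ.open_subset_closure_inter (isOpen_Ioo (a := x) (b := b))).trans (closure_mono ?_))
    isClosed_closure (by rw [closure_Ioo hx.2.ne]; exact ⟨le_rfl, hx.2.le⟩)
  exact fun y ⟨⟨hxy, hyb⟩, hy⟩ => ⟨⟨⟨hx.1.trans hxy, hyb⟩, hy⟩, hxy.le⟩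

end DenseInIoo

theorem exists_subseq_tendsto_of_monotoneOn {a b M : ℝ} {g : ℕ → ℝ → ℝ}
    (hmono : ∀ n, MonotoneOn (g n) (Icc a b)) (hbdd : ∀ n, ∀ x ∈ Icc a b, |g n x| ≤ M) :
    ∃ φ : ℕ → ℕ, StrictMono φ ∧
      ∀ x ∈ Icc a b, ∃ l, Tendsto (fun n => g (φ n) x) atTop (𝓝 l) := by
  set D := Ioo a b ∩ range ((↑) : ℚ → ℝ)
  have hDs : D ⊆ Icc a b := fun x hx => Ioo_subset_Icc_self hx.1
  obtain ⟨φ₁, hφ₁, hD⟩ := exists_subseq_tendsto_of_countable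
    ((countable_range _).mono inter_subset_right) fun n x hx => hbdd n x (hDs hx)
  choose! L hL using hD
  have hLmono : MonotoneOn L D := fun d hd e he hde =>
    le_of_tendsto_of_tendsto' (hL d hd) (hL e he) fun n => hmono _ (hDs hd) (hDs he) hde
  have hLbdd : ∀ d ∈ D, |L d| ≤ M := fun d hd =>
    le_of_tendsto (hL d hd).abs (Eventually.of_forall fun n => hbdd _ d (hDs hd))
  obtain ⟨G, hGmono, hLG⟩ := hLmono.exists_monotone_extension
    ⟨-M, forall_mem_image.2 fun d hd => neg_le_of_abs_le (hLbdd d hd)⟩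
    ⟨M, forall_mem_image.2 fun d hd => le_of_abs_le (hLbdd d hd)⟩
  have hcont : ∀ x ∈ Ioo a b, ContinuousAt G x →
      Tendsto (fun n => g (φ₁ n) x) atTop (𝓝 (G x)) := fun x hx hGx =>
    tendsto_of_monotoneOn_of_continuousAt (fun n => hmono (φ₁ n)) hDs
      (fun d hd => hLG hd ▸ hL d hd) (Ioo_subset_Icc_self hx) hGx
      (Rat.denseRange_cast.mem_closure_Ioo_inter_Iic hx)
      (Rat.denseRange_cast.mem_closure_Ioo_inter_Ici hx)
  -- The squeeze works only at interior continuity points of `G`; the others are countably many.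
  obtain ⟨φ₂, hφ₂, hB⟩ := exists_subseq_tendsto_of_countable
    (s := Icc a b ∩ ({x | ¬ContinuousAt G x} ∪ {a, b}))
    ((hGmono.countable_not_continuousAt.union ((countable_singleton b).insert a)).mono
      inter_subset_right)
    (g := fun n => g (φ₁ n)) fun n x hx => hbdd _ x hx.1
  refine ⟨φ₁ ∘ φ₂, hφ₁.comp hφ₂, fun x hx => ?_⟩
  by_cases hxB : x ∈ {x | ¬ContinuousAt G x} ∪ {a, b}
  · exact hB x ⟨hx, hxB⟩
  · simp only [mem_union, mem_ofPred_eq, mem_insert_iff, mem_singleton_iff, not_or,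
      not_not] at hxB
    obtain ⟨hGx, hxa, hxb⟩ := hxB
    exact ⟨G x, (hcont x ⟨hx.1.lt_of_ne' hxa, hx.2.lt_of_ne hxb⟩ hGx).comp hφ₂.tendsto_atTop⟩

theorem exists_subseq_tendsto_of_boundedVariationOn {a b M V : ℝ} (hab : a ≤ b)
    {g : ℕ → ℝ → ℝ} (hbv : ∀ n, BoundedVariationOn (g n) (Icc a b))
    (hvar : ∀ n, (eVariationOn (g n) (Icc a b)).toReal ≤ V)
    (hbdd : ∀ n, ∀ x ∈ Icc a b, |g n x| ≤ M) :
    ∃ φ : ℕ → ℕ, StrictMono φ ∧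
      ∀ x ∈ Icc a b, ∃ l, Tendsto (fun n => g (φ n) x) atTop (𝓝 l) := by
  have ha : a ∈ Icc a b := left_mem_Icc.2 hab
  set p : ℕ → ℝ → ℝ := fun n => variationOnFromTo (g n) (Icc a b) a
  have hp : ∀ n, ∀ x ∈ Icc a b, |p n x| ≤ V := fun n x hx => by
    rw [abs_of_nonneg (variationOnFromTo.nonneg_of_le _ _ hx.1),
      variationOnFromTo.eq_of_le _ _ hx.1]
    exact (ENNReal.toReal_mono (hbv n) (eVariationOn.mono _ inter_subset_left)).trans (hvar n)
  have hq : ∀ n, ∀ x ∈ Icc a b, |p n x - g n x| ≤ V + M := fun n x hx =>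
    (abs_sub _ _).trans (add_le_add (hp n x hx) (hbdd n x hx))
  obtain ⟨φ₁, hφ₁, hplim⟩ := exists_subseq_tendsto_of_monotoneOn
    (fun n => variationOnFromTo.monotoneOn (hbv n).locallyBoundedVariationOn ha) hp
  obtain ⟨φ₂, hφ₂, hqlim⟩ := exists_subseq_tendsto_of_monotoneOn
    (g := fun n x => p (φ₁ n) x - g (φ₁ n) x)
    (fun n => variationOnFromTo.sub_self_monotoneOn (hbv _).locallyBoundedVariationOn ha)
    fun n => hq (φ₁ n)
  refine ⟨φ₁ ∘ φ₂, hφ₁.comp hφ₂, fun x hx => ?_⟩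
  obtain ⟨lp, hlp⟩ := hplim x hx
  obtain ⟨lq, hlq⟩ := hqlim x hx
  exact ⟨lp - lq, by simpa [p] using (hlp.comp hφ₂.tendsto_atTop).sub hlq⟩

theorem abs_le_setIntegral_div_add_eVariationOn {f : ℝ → ℝ} {a b x : ℝ} (hab : a < b)
    (hf : BoundedVariationOn f (Icc a b)) (hint : IntegrableOn f (Ioo a b))
    (hx : x ∈ Icc a b) :
    |f x| ≤ (∫ y in Ioo a b, |f y|) / (b - a) + (eVariationOn f (Icc a b)).toReal := by
  set V := (eVariationOn f (Icc a b)).toReal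
  have hpoint : ∀ y ∈ Ioo a b, |f x| - V ≤ |f y| := fun y hy => by
    have := hf.dist_le hx (Ioo_subset_Icc_self hy)
    rw [Real.dist_eq] at this
    linarith [abs_sub_abs_le_abs_sub (f x) (f y)]
  have hmean : (b - a) * (|f x| - V) ≤ ∫ y in Ioo a b, |f y| := by
    simpa [Real.volume_Ioo, hab.le] using
      setIntegral_mono_on (integrableOn_const measure_Ioo_lt_top.ne enorm_ne_top) hint.abs
        measurableSet_Ioo hpoint
  rw [← sub_le_iff_le_add, le_div_iff₀ (sub_pos.2 hab), mul_comm]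
  exact hmean

theorem eVariationOn_le_of_tendsto {α E ι : Type*} [LinearOrder α] [PseudoEMetricSpace E]
    {F : ι → α → E} {p : Filter ι} [p.NeBot] {f : α → E} {s : Set α}
    (hlim : ∀ x ∈ s, Tendsto (fun i => F i x) p (𝓝 (f x))) {v : ℝ≥0∞}
    (hvar : ∀ᶠ i in p, eVariationOn (F i) s ≤ v) :
    eVariationOn f s ≤ v := by
  by_contra! hv
  obtain ⟨i, hlt, hle⟩ := ((eVariationOn.lowerSemicontinuous_aux hlim hv).and hvar).exists
  exact hlt.not_ge hle

section BoundedConvergence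

variable {α : Type*} [MeasurableSpace α] {μ : Measure α} {F : ℕ → α → ℝ} {f : α → ℝ} {M : ℝ}

theorem ae_abs_le_of_tendsto_of_abs_le (hbdd : ∀ n, ∀ᵐ x ∂μ, |F n x| ≤ M)
    (hlim : ∀ᵐ x ∂μ, Tendsto (fun n => F n x) atTop (𝓝 (f x))) :
    ∀ᵐ x ∂μ, |f x| ≤ M := by
  filter_upwards [ae_all_iff.2 hbdd, hlim] with x hx hxlim
  exact le_of_tendsto' hxlim.abs hx

variable [IsFiniteMeasure μ]

theorem integrable_of_tendsto_of_abs_le (hF : ∀ n, AEStronglyMeasurable (F n) μ)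
    (hbdd : ∀ n, ∀ᵐ x ∂μ, |F n x| ≤ M)
    (hlim : ∀ᵐ x ∂μ, Tendsto (fun n => F n x) atTop (𝓝 (f x))) :
    Integrable f μ :=
  .of_bound (aestronglyMeasurable_of_tendsto_ae atTop hF hlim) M
    (ae_abs_le_of_tendsto_of_abs_le hbdd hlim)

theorem tendsto_integral_abs_sub_of_tendsto_of_abs_le (hF : ∀ n, AEStronglyMeasurable (F n) μ)
    (hbdd : ∀ n, ∀ᵐ x ∂μ, |F n x| ≤ M)
    (hlim : ∀ᵐ x ∂μ, Tendsto (fun n => F n x) atTop (𝓝 (f x))) :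
    Tendsto (fun n => ∫ x, |F n x - f x| ∂μ) atTop (𝓝 0) := by
  have hf := ae_abs_le_of_tendsto_of_abs_le hbdd hlim
  have hdom : ∀ n, ∀ᵐ x ∂μ, ‖|F n x - f x|‖ ≤ M + M := fun n => by
    filter_upwards [hbdd n, hf] with x hFx hfx
    rw [Real.norm_eq_abs, abs_abs]
    exact (abs_sub _ _).trans (add_le_add hFx hfx)
  have hlim0 : ∀ᵐ x ∂μ, Tendsto (fun n => |F n x - f x|) atTop (𝓝 0) := by
    filter_upwards [hlim] with x hx
    simpa using (hx.sub_const (f x)).abs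
  simpa using tendsto_integral_of_dominated_convergence (fun _ => M + M)
    (fun n => ((hF n).sub (aestronglyMeasurable_of_tendsto_ae atTop hF hlim)).norm)
    (integrable_const _) hdom hlim0

end BoundedConvergence

/-- **BV compactness in `L¹`.** A sequence of functions on `[α,β]` that is bounded in
`L¹` and has uniformly bounded total variation admits a subsequence converging pointwise
on `[α,β]` and in `L¹((α,β))` to a function of bounded variation. -/
theorem bv_compactness_in_L1 (α β : ℝ) (hαβ : α < β) (fn : ℕ → ℝ → ℝ)
    (hInt : ∀ n, MeasureTheory.IntegrableOn (fn n) (Set.Ioo α β))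
    (C : ℝ)
    (hC : ∀ n, (∫ x in Set.Ioo α β, |fn n x|)
        + (eVariationOn (fn n) (Set.Icc α β)).toReal ≤ C)
    (hBV : ∀ n, eVariationOn (fn n) (Set.Icc α β) ≠ ⊤) :
    ∃ (f : ℝ → ℝ) (φ : ℕ → ℕ), StrictMono φ ∧
      eVariationOn f (Set.Icc α β) ≠ ⊤ ∧
      MeasureTheory.IntegrableOn f (Set.Ioo α β) ∧
      (∀ x ∈ Set.Icc α β, Tendsto (fun a => fn (φ a) x) atTop (nhds (f x))) ∧
      Tendsto (fun a => ∫ x in Set.Ioo α β, |fn (φ a) x - f x|) atTop (nhds 0) := by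
  have hIntC : ∀ n, ∫ x in Ioo α β, |fn n x| ≤ C := fun n =>
    (le_add_of_nonneg_right ENNReal.toReal_nonneg).trans (hC n)
  have hVarC : ∀ n, (eVariationOn (fn n) (Icc α β)).toReal ≤ C := fun n =>
    (le_add_of_nonneg_left (integral_nonneg fun _ => abs_nonneg _)).trans (hC n)
  have hbdd : ∀ n, ∀ x ∈ Icc α β, |fn n x| ≤ C / (β - α) + C := fun n x hx =>
    (abs_le_setIntegral_div_add_eVariationOn hαβ (hBV n) (hInt n) hx).trans
      (add_le_add (div_le_div_of_nonneg_right (hIntC n) (sub_pos.2 hαβ).le) (hVarC n))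
  obtain ⟨φ, hφ, hconv⟩ :=
    exists_subseq_tendsto_of_boundedVariationOn hαβ.le hBV hVarC hbdd
  choose! f hf using hconv
  have hbdd_ae : ∀ a, ∀ᵐ x ∂volume.restrict (Ioo α β), |fn (φ a) x| ≤ C / (β - α) + C :=
    fun a => ae_restrict_of_forall_mem measurableSet_Ioo fun x hx =>
      hbdd _ x (Ioo_subset_Icc_self hx)
  have hlim : ∀ᵐ x ∂volume.restrict (Ioo α β), Tendsto (fun a => fn (φ a) x) atTop (𝓝 (f x)) :=
    ae_restrict_of_forall_mem measurableSet_Ioo fun x hx => hf x (Ioo_subset_Icc_self hx)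
  have hmeas := fun a => (hInt (φ a)).aestronglyMeasurable
  refine ⟨f, φ, hφ, ?_, integrable_of_tendsto_of_abs_le hmeas hbdd_ae hlim, hf,
    tendsto_integral_abs_sub_of_tendsto_of_abs_le hmeas hbdd_ae hlim⟩
  refine ne_top_of_le_ne_top (ENNReal.ofReal_ne_top (r := C)) (eVariationOn_le_of_tendsto hf
    (Eventually.of_forall fun a => ?_))
  exact (ENNReal.ofReal_toReal (hBV _)).symm.trans_le (ENNReal.ofReal_le_ofReal (hVarC _))
end

section
/- (Vanishing of all odd derivatives at the axis.) Let r₀ > 0, a, b ∈ ℝ, and let u ∈ C^∞([0,r₀)) satisfy u'(0) = 0 and, for all r ∈ (0,r₀), the third-order ODE u'''(r) + (u'(r)/r)' = (1/2)·(1+u'(r)²)^{5/2}·a·r + b·(1+u'(r)²)²·u'(r) + (5u'(r)/(2(1+u'(r)²)))·u''(r)² + (u'(r)³/(2r²))·(3+u'(r)²). Then u^{(2k+1)}(0) = 0 for every integer k ≥ 0. -/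
open Polynomial Asymptotics Filter Set Topology

namespace OddVanish


/-- `g` agrees with polynomial `p` to order `n` as `r → 0⁺`. -/
def Approx (g : ℝ → ℝ) (p : ℝ[X]) (n : ℕ) : Prop :=
  (fun r => g r - p.eval r) =o[𝓝[>] (0:ℝ)] fun r => r ^ n

lemma approx_of_eventuallyEq {g : ℝ → ℝ} {p : ℝ[X]} {n : ℕ}
    (he : ∀ᶠ r in 𝓝[>] (0:ℝ), g r = p.eval r) : Approx g p n := by
  have : (fun r : ℝ => g r - p.eval r) =ᶠ[𝓝[>] (0:ℝ)] fun _ => (0:ℝ) :=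
    he.mono fun r hr => by simp [hr]
  exact (isLittleO_zero _ _).congr' this.symm EventuallyEq.rfl

lemma Approx.congr {g h : ℝ → ℝ} {p : ℝ[X]} {n : ℕ} (hg : Approx g p n)
    (he : ∀ᶠ r in 𝓝[>] (0:ℝ), g r = h r) : Approx h p n := by
  refine hg.congr' (he.mono fun r hr => by simp [hr]) EventuallyEq.rfl

lemma Approx.add {g h : ℝ → ℝ} {p q : ℝ[X]} {n : ℕ} (hg : Approx g p n) (hh : Approx h q n) :
    Approx (fun r => g r + h r) (p + q) n := by
  have := IsLittleO.add hg hh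
  simpa [Approx, sub_add_sub_comm] using this

lemma Approx.sub {g h : ℝ → ℝ} {p q : ℝ[X]} {n : ℕ} (hg : Approx g p n) (hh : Approx h q n) :
    Approx (fun r => g r - h r) (p - q) n := by
  have := IsLittleO.sub hg hh
  simpa [Approx, sub_sub_sub_comm] using this

lemma Approx.tendsto {g : ℝ → ℝ} {p : ℝ[X]} {n : ℕ} (hg : Approx g p n) :
    Tendsto g (𝓝[>] (0:ℝ)) (𝓝 (p.eval 0)) := by
  have h1 : Tendsto (fun r : ℝ => p.eval r) (𝓝[>] (0:ℝ)) (𝓝 (p.eval 0)) :=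
    (p.continuous_aeval.tendsto 0).mono_left nhdsWithin_le_nhds
  have h2 : Tendsto (fun r : ℝ => g r - p.eval r) (𝓝[>] (0:ℝ)) (𝓝 0) := by
    rw [← isLittleO_one_iff ℝ]
    refine hg.trans_isBigO (IsBigO.of_bound 1 ?_)
    filter_upwards [Ioo_mem_nhdsGT (by norm_num : (0:ℝ) < 1)] with r hr
    have h0 : (0:ℝ) < r := hr.1
    have h1' : r ≤ 1 := hr.2.le
    simp only [norm_pow, Real.norm_eq_abs, abs_of_pos h0, norm_one, one_mul]
    exact pow_le_one₀ h0.le h1'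
  have := h2.add h1
  simpa using this

lemma Approx.isBigO_one {g : ℝ → ℝ} {p : ℝ[X]} {n : ℕ} (hg : Approx g p n) :
    g =O[𝓝[>] (0:ℝ)] (fun _ => (1:ℝ)) := hg.tendsto.isBigO_one ℝ

lemma Approx.mul {g h : ℝ → ℝ} {p q : ℝ[X]} {n : ℕ} (hg : Approx g p n) (hh : Approx h q n) :
    Approx (fun r => g r * h r) (p * q) n := by
  have e1 : (fun r => g r * (h r - q.eval r)) =o[𝓝[>] (0:ℝ)] fun r => r ^ n :=
    hg.isBigO_one.mul_isLittleO hh |>.congr (by intro r; ring) (by intro r; simp)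
  have hq : (fun r : ℝ => q.eval r) =O[𝓝[>] (0:ℝ)] (fun _ => (1:ℝ)) :=
    (((q.continuous_aeval.tendsto 0).mono_left nhdsWithin_le_nhds)).isBigO_one ℝ
  have e2 : (fun r => (g r - p.eval r) * q.eval r) =o[𝓝[>] (0:ℝ)] fun r => r ^ n :=
    (hg.mul_isBigO hq).congr (fun r => rfl) (by intro r; simp)
  have := e1.add e2
  refine this.congr' (by filter_upwards with r; simp [Polynomial.eval_mul]; ring) EventuallyEq.rfl

lemma Approx.const_mul {g : ℝ → ℝ} {p : ℝ[X]} {n : ℕ} (c : ℝ) (hg : Approx g p n) :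
    Approx (fun r => c * g r) (C c * p) n :=
  (approx_of_eventuallyEq (g := fun _ => c) (p := C c) (n := n)
    (by filter_upwards with r; simp)).mul hg

lemma Approx.pow {g : ℝ → ℝ} {p : ℝ[X]} {n : ℕ} (hg : Approx g p n) (m : ℕ) :
    Approx (fun r => (g r) ^ m) (p ^ m) n := by
  induction m with
  | zero =>
    simpa using approx_of_eventuallyEq (g := fun _ => (1:ℝ)) (p := 1) (n := n)
      (by filter_upwards with r; simp)
  | succ m ih =>
    have := ih.mul hg
    simpa [pow_succ] using this



lemma iteratedDerivWithin_congr_set' {f : ℝ → ℝ} {s t : Set ℝ} {x : ℝ}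
    (h : s =ᶠ[nhds x] t) (n : ℕ) :
    iteratedDerivWithin n f s x = iteratedDerivWithin n f t x := by
  simp only [iteratedDerivWithin]
  rw [iteratedFDerivWithin_congr_set h]

lemma Icc_eventuallyEq_Ico {b r₀ : ℝ} (hb : 0 < b) (hbr : b < r₀) :
    (Icc (0:ℝ) b : Set ℝ) =ᶠ[nhds (0:ℝ)] (Ico (0:ℝ) r₀ : Set ℝ) := by
  have hmem : Ioo (-b) b ∈ nhds (0:ℝ) := Ioo_mem_nhds (by linarith) hb
  rw [Filter.eventuallyEq_set]
  filter_upwards [hmem] with x hx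
  constructor
  · rintro ⟨h1, h2⟩; exact ⟨h1, lt_of_le_of_lt h2 hbr⟩
  · rintro ⟨h1, _⟩; exact ⟨h1, hx.2.le⟩

/-- Taylor's theorem as a little-o statement at the left endpoint of `Ico 0 r₀`. -/
lemma taylor_littleO {r₀ : ℝ} (hr₀ : 0 < r₀) {g : ℝ → ℝ}
    (hg : ∀ m : ℕ, ContDiffOn ℝ m g (Ico 0 r₀)) (n : ℕ) :
    (fun r => g r - ∑ j ∈ Finset.range (n+1),
        iteratedDerivWithin j g (Ico 0 r₀) 0 / (j.factorial : ℝ) * r ^ j) =o[𝓝[>] (0:ℝ)]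
      fun r => r ^ n := by
  set b := r₀ / 2 with hbdef
  have hb : 0 < b := by positivity
  have hbr : b < r₀ := by simp [hbdef]; linarith
  have hsub : Icc (0:ℝ) b ⊆ Ico 0 r₀ := fun x hx => ⟨hx.1, lt_of_le_of_lt hx.2 hbr⟩
  have h1 : ContDiffOn ℝ ((n:ℕ∞) + 1) g (Icc 0 b) := by
    have := (hg (n+1)).mono hsub
    exact_mod_cast this.of_le (by exact_mod_cast le_refl _)
  obtain ⟨Cb, hCb⟩ := exists_taylor_mean_remainder_bound hb.le h1
  -- rewrite the Taylor polynomial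
  have hset : ∀ j : ℕ, iteratedDerivWithin j g (Icc 0 b) 0 = iteratedDerivWithin j g (Ico 0 r₀) 0 :=
    fun j => iteratedDerivWithin_congr_set' (Icc_eventuallyEq_Ico hb hbr) j
  have htay : ∀ x : ℝ, taylorWithinEval g n (Icc 0 b) 0 x
      = ∑ j ∈ Finset.range (n+1), iteratedDerivWithin j g (Ico 0 r₀) 0 / (j.factorial : ℝ) * x ^ j := by
    intro x
    rw [taylor_within_apply]
    refine Finset.sum_congr rfl fun j _ => ?_
    rw [hset j]
    simp [smul_eq_mul]
    ring
  -- big-O bound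
  have hO : (fun r => g r - ∑ j ∈ Finset.range (n+1),
      iteratedDerivWithin j g (Ico 0 r₀) 0 / (j.factorial : ℝ) * r ^ j) =O[𝓝[>] (0:ℝ)]
      fun r => r ^ (n+1) := by
    refine IsBigO.of_bound Cb ?_
    filter_upwards [Ioo_mem_nhdsGT hb] with r hr
    have hrI : r ∈ Icc (0:ℝ) b := ⟨hr.1.le, hr.2.le⟩
    have := hCb r hrI
    rw [htay r] at this
    simpa [abs_of_pos hr.1, abs_of_nonneg (pow_nonneg hr.1.le (n+1))] using this
  refine hO.trans_isLittleO ?_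
  have hr1 : (fun r : ℝ => r) =o[𝓝[>] (0:ℝ)] (fun _ => (1:ℝ)) := by
    rw [isLittleO_one_iff]
    exact tendsto_id.mono_left nhdsWithin_le_nhds
  have := (isBigO_refl (fun r : ℝ => r ^ n) (𝓝[>] (0:ℝ))).mul_isLittleO hr1
  refine this.congr (fun r => by ring) (fun r => by ring)

/-- A polynomial that is `o(r^n)` as `r → 0⁺` has vanishing coefficients up to degree `n`. -/
lemma coeff_eq_zero_of_isLittleO {p : ℝ[X]} {n : ℕ}
    (h : (fun r => p.eval r) =o[𝓝[>] (0:ℝ)] fun r => r ^ n) :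
    ∀ j ≤ n, p.coeff j = 0 := by
  induction n generalizing p with
  | zero =>
    intro j hj
    interval_cases j
    have h0 : Tendsto (fun r : ℝ => p.eval r) (𝓝[>] (0:ℝ)) (𝓝 (p.eval 0)) :=
      (p.continuous_aeval.tendsto 0).mono_left nhdsWithin_le_nhds
    have h1 : Tendsto (fun r : ℝ => p.eval r) (𝓝[>] (0:ℝ)) (𝓝 0) := by
      rw [← isLittleO_one_iff ℝ]
      simpa using h
    have := tendsto_nhds_unique h0 h1
    simpa [Polynomial.eval_zero, ← Polynomial.coeff_zero_eq_eval_zero] using this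
  | succ n ih =>
    -- first, constant coefficient vanishes
    have hc0 : p.coeff 0 = 0 := by
      have h0 : Tendsto (fun r : ℝ => p.eval r) (𝓝[>] (0:ℝ)) (𝓝 (p.eval 0)) :=
        (p.continuous_aeval.tendsto 0).mono_left nhdsWithin_le_nhds
      have h1 : Tendsto (fun r : ℝ => p.eval r) (𝓝[>] (0:ℝ)) (𝓝 0) := by
        rw [← isLittleO_one_iff ℝ]
        refine h.trans_isBigO (IsBigO.of_bound 1 ?_)
        filter_upwards [Ioo_mem_nhdsGT (by norm_num : (0:ℝ) < 1)] with r hr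
        simp only [norm_pow, Real.norm_eq_abs, abs_of_pos hr.1, norm_one, one_mul]
        exact pow_le_one₀ hr.1.le hr.2.le
      have := tendsto_nhds_unique h0 h1
      simpa [← Polynomial.coeff_zero_eq_eval_zero] using this
    have hXq : p = X * p.divX := by
      conv_lhs => rw [← Polynomial.X_mul_divX_add p]
      simp [hc0]
    have hq : (fun r => (p.divX).eval r) =o[𝓝[>] (0:ℝ)] fun r => r ^ n := by
      rw [isLittleO_iff]
      intro c hc
      have := (isLittleO_iff.mp h) hc
      filter_upwards [this, self_mem_nhdsWithin] with r hr hrpos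
      have hrpos' : (0:ℝ) < r := hrpos
      rw [hXq] at hr
      simp only [Polynomial.eval_mul, Polynomial.eval_X, Real.norm_eq_abs, abs_mul,
        abs_of_pos hrpos', pow_succ'] at hr ⊢
      rw [abs_pow, abs_of_pos hrpos'] at hr ⊢
      nlinarith [abs_nonneg ((p.divX).eval r), pow_pos hrpos' n]
    intro j hj
    rcases Nat.eq_zero_or_pos j with rfl | hjpos
    · exact hc0
    · obtain ⟨i, rfl⟩ := Nat.exists_eq_succ_of_ne_zero hjpos.ne'
      have := ih hq i (by omega)
      rwa [Polynomial.coeff_divX] at this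



/-- "Even through N": all odd coefficients below `N` vanish. -/
def Ep (N : ℕ) (p : ℝ[X]) : Prop := ∀ m, m < N → Odd m → p.coeff m = 0

lemma Ep.mono {M N : ℕ} {p : ℝ[X]} (h : Ep N p) (hMN : M ≤ N) : Ep M p :=
  fun m hm hodd => h m (lt_of_lt_of_le hm hMN) hodd

lemma Ep_C (N : ℕ) (c : ℝ) : Ep N (C c) := by
  intro m hm hodd
  rw [Polynomial.coeff_C]
  have : m ≠ 0 := by rintro rfl; exact (Nat.not_odd_zero) hodd
  simp [this]

lemma Ep.add {N : ℕ} {p q : ℝ[X]} (hp : Ep N p) (hq : Ep N q) : Ep N (p + q) := by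
  intro m hm hodd
  simp [Polynomial.coeff_add, hp m hm hodd, hq m hm hodd]

lemma Ep.mul {N : ℕ} {p q : ℝ[X]} (hp : Ep N p) (hq : Ep N q) : Ep N (p * q) := by
  intro m hm hodd
  rw [Polynomial.coeff_mul]
  refine Finset.sum_eq_zero fun x hx => ?_
  rw [Finset.HasAntidiagonal.mem_antidiagonal] at hx
  rcases Nat.even_or_odd x.1 with he | ho
  · have h2 : Odd x.2 := by
      rcases he with ⟨t, ht⟩; rcases hodd with ⟨s, hs⟩
      exact ⟨s - t, by omega⟩
    rw [hq x.2 (lt_of_le_of_lt (by omega) hm) h2, mul_zero]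
  · rw [hp x.1 (lt_of_le_of_lt (by omega) hm) ho, zero_mul]

lemma Ep.pow {N : ℕ} {p : ℝ[X]} (hp : Ep N p) (m : ℕ) : Ep N (p ^ m) := by
  induction m with
  | zero => simpa using Ep_C N 1
  | succ m ih => rw [pow_succ]; exact ih.mul hp



noncomputable def taylorPoly (c : ℕ → ℝ) (n : ℕ) : ℝ[X] :=
  ∑ j ∈ Finset.range (n+1), C (c j) * X ^ j

lemma coeff_taylorPoly (c : ℕ → ℝ) (n m : ℕ) :
    (taylorPoly c n).coeff m = if m ≤ n then c m else 0 := by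
  rw [taylorPoly, Polynomial.finset_sum_coeff]
  simp only [Polynomial.coeff_C_mul, Polynomial.coeff_X_pow, mul_ite, mul_one, mul_zero]
  simp_rw [eq_comm (a := m)]
  rw [Finset.sum_ite_eq' (Finset.range (n+1)) m c]
  simp [Nat.lt_succ_iff]

lemma eval_taylorPoly (c : ℕ → ℝ) (n : ℕ) (r : ℝ) :
    (taylorPoly c n).eval r = ∑ j ∈ Finset.range (n+1), c j * r ^ j := by
  rw [taylorPoly]
  simp [Polynomial.eval_finset_sum]

lemma taylor_approx {r₀ : ℝ} (hr₀ : 0 < r₀) {g : ℝ → ℝ}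
    (hg : ∀ m : ℕ, ContDiffOn ℝ m g (Ico 0 r₀)) (n : ℕ) :
    Approx g (taylorPoly (fun j => iteratedDerivWithin j g (Ico 0 r₀) 0 / (j.factorial : ℝ)) n) n := by
  have := taylor_littleO hr₀ hg n
  refine this.congr' ?_ EventuallyEq.rfl
  filter_upwards with r
  rw [eval_taylorPoly]

noncomputable def H₁ : ℝ → ℝ := fun t => (1+t) ^ ((5:ℝ)/2)
noncomputable def H₂ : ℝ → ℝ := fun t => (1+t)⁻¹

lemma contDiffOn_H₁ (m : ℕ) : ContDiffOn ℝ m H₁ (Icc (0:ℝ) 1) := by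
  refine ContDiffOn.rpow_const_of_ne ?_ ?_
  · exact (contDiffOn_const.add contDiffOn_id)
  · intro x hx; have := hx.1; nlinarith

lemma contDiffOn_H₂ (m : ℕ) : ContDiffOn ℝ m H₂ (Icc (0:ℝ) 1) := by
  refine ContDiffOn.inv ?_ ?_
  · exact (contDiffOn_const.add contDiffOn_id)
  · intro x hx; have := hx.1; nlinarith





-- placeholders for already-proved lemmas
lemma approx_sum {ι : Type*} (s : Finset ι) (f : ι → ℝ → ℝ) (p : ι → ℝ[X]) (n : ℕ)
    (h : ∀ i ∈ s, Approx (f i) (p i) n) :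
    Approx (fun r => ∑ i ∈ s, f i r) (∑ i ∈ s, p i) n := by
  classical
  induction s using Finset.cons_induction with
  | empty => simpa using approx_of_eventuallyEq (by filter_upwards with r; simp)
  | cons a s ha ih =>
    simp only [Finset.sum_cons]
    exact (h a (Finset.mem_cons_self a s)).add (ih fun i hi => h i (Finset.mem_cons_of_mem hi))

lemma Ep.sum {ι : Type*} (s : Finset ι) (p : ι → ℝ[X]) (N : ℕ)
    (h : ∀ i ∈ s, Ep N (p i)) : Ep N (∑ i ∈ s, p i) := by
  classical
  induction s using Finset.cons_induction with
  | empty => simpa using Ep_C N 0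
  | cons a s ha ih =>
    rw [Finset.sum_cons]
    exact (h a (Finset.mem_cons_self a s)).add (ih fun i hi => h i (Finset.mem_cons_of_mem hi))

/-- Composition with a smooth function on `[0,1]`. -/
lemma approx_comp {h : ℝ → ℝ} (hh : ∀ m : ℕ, ContDiffOn ℝ m h (Icc 0 1))
    {g : ℝ → ℝ} {p : ℝ[X]} {n : ℕ}
    (hg : Approx g p n) (hmem : ∀ᶠ r in 𝓝[>] (0:ℝ), g r ∈ Icc (0:ℝ) 1)
    (hO : g =O[𝓝[>] (0:ℝ)] fun r => r ^ 2) :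
    ∃ q : ℝ[X], Approx (fun r => h (g r)) q n ∧ ∀ N, Ep N p → Ep N q := by
  have h1 : ContDiffOn ℝ ((n:ℕ∞) + 1) h (Icc 0 1) := by
    have := hh (n+1)
    exact_mod_cast this.of_le (by exact_mod_cast le_refl _)
  obtain ⟨Cb, hCb⟩ := exists_taylor_mean_remainder_bound (by norm_num : (0:ℝ) ≤ 1) h1
  set D : ℕ → ℝ := fun m => iteratedDerivWithin m h (Icc 0 1) 0 with hD
  set q : ℝ[X] := ∑ m ∈ Finset.range (n+1), C ((m.factorial : ℝ)⁻¹ * D m) * p ^ m with hq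
  refine ⟨q, ?_, ?_⟩
  · -- Approx
    have hA : Approx (fun r => ∑ m ∈ Finset.range (n+1),
        (m.factorial : ℝ)⁻¹ * D m * (g r) ^ m) q n := by
      rw [hq]
      exact approx_sum _ _ _ _ fun m _ => Approx.const_mul _ (hg.pow m)
    have hB : (fun r => h (g r) - ∑ m ∈ Finset.range (n+1),
        (m.factorial : ℝ)⁻¹ * D m * (g r) ^ m) =o[𝓝[>] (0:ℝ)] fun r => r ^ n := by
      have hbig : (fun r => h (g r) - ∑ m ∈ Finset.range (n+1),
          (m.factorial : ℝ)⁻¹ * D m * (g r) ^ m) =O[𝓝[>] (0:ℝ)]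
          fun r => (g r) ^ (n+1) := by
        refine IsBigO.of_bound |Cb| ?_
        filter_upwards [hmem] with r hr
        have hgr0 : (0:ℝ) ≤ g r := hr.1
        have := hCb (g r) hr
        rw [taylor_within_apply] at this
        have hrw : ∑ k ∈ Finset.range (n+1), ((k.factorial : ℝ)⁻¹ * (g r - 0) ^ k) • D k
            = ∑ m ∈ Finset.range (n+1), (m.factorial : ℝ)⁻¹ * D m * (g r) ^ m := by
          refine Finset.sum_congr rfl fun m _ => ?_
          simp [smul_eq_mul]; ring
        rw [hrw] at this
        calc ‖h (g r) - ∑ m ∈ Finset.range (n+1), (m.factorial : ℝ)⁻¹ * D m * (g r) ^ m‖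
            ≤ Cb * (g r - 0) ^ (n+1) := this
          _ ≤ |Cb| * ‖(g r) ^ (n+1)‖ := by
              rw [sub_zero, norm_pow, Real.norm_eq_abs, abs_of_nonneg hgr0]
              exact mul_le_mul_of_nonneg_right (le_abs_self Cb) (pow_nonneg hgr0 _)
      have hpow : (fun r => (g r) ^ (n+1)) =O[𝓝[>] (0:ℝ)] fun r => r ^ (2*(n+1)) := by
        have hpow0 := hO.pow (n+1)
        have heq : (fun r : ℝ => (r ^ 2) ^ (n+1)) = fun r : ℝ => r ^ (2*(n+1)) := by
          funext r; rw [← pow_mul]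
        rwa [heq] at hpow0
      have hlit : (fun r : ℝ => r ^ (2*(n+1))) =o[𝓝[>] (0:ℝ)] fun r => r ^ n := by
        have h2 : Tendsto (fun r : ℝ => r ^ (n+2)) (𝓝[>] (0:ℝ)) (𝓝 0) := by
          have := ((continuous_pow (n+2)).tendsto (0:ℝ)).mono_left
            (nhdsWithin_le_nhds (s := Ioi (0:ℝ)))
          simpa using this
        have h3 : (fun r : ℝ => r ^ (n+2)) =o[𝓝[>] (0:ℝ)] (fun _ => (1:ℝ)) :=
          (isLittleO_one_iff ℝ).mpr h2
        have := (isBigO_refl (fun r : ℝ => r ^ n) (𝓝[>] (0:ℝ))).mul_isLittleO h3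
        refine this.congr (fun r => by ring) (fun r => by ring)
      exact hbig.trans_isLittleO (hpow.trans_isLittleO hlit)
    have := hB.add hA
    refine this.congr (fun r => by ring) (fun r => by simp)
  · -- parity
    intro N hp
    rw [hq]
    exact Ep.sum _ _ _ fun m _ => (Ep_C N _).mul (hp.pow m)





lemma coeff_mul_X_pow_eq_zero {w : ℝ[X]} {N t m : ℕ} (hw : Ep N w)
    (h : t ≤ m → (m - t) % 2 = 1 ∧ m - t < N) : (w * X^t).coeff m = 0 := by
  rw [Polynomial.coeff_mul_X_pow']
  split_ifs with ht
  · exact hw _ (h ht).2 (Nat.odd_iff.mpr (h ht).1)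
  · rfl

lemma approx_unique {L : ℝ → ℝ} {P Q : ℝ[X]} {n : ℕ}
    (h1 : Approx L P n) (h2 : Approx L Q n) : ∀ j ≤ n, P.coeff j = Q.coeff j := by
  intro j hj
  have hdiff : (fun r => (Q - P).eval r) =o[𝓝[>] (0:ℝ)] fun r => r ^ n := by
    have := IsLittleO.sub h1 h2
    refine this.congr' ?_ EventuallyEq.rfl
    filter_upwards with r
    rw [Polynomial.eval_sub]
    ring
  have := coeff_eq_zero_of_isLittleO hdiff j hj
  rw [Polynomial.coeff_sub] at this
  linarith

lemma key (r₀ a b : ℝ) (hr₀ : 0 < r₀) (f : ℝ → ℝ)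
    (hf : ∀ m : ℕ, ContDiffOn ℝ m f (Ico 0 r₀))
    (hf0 : f 0 = 0)
    (k' : ℕ)
    (IH : ∀ m, m < 2*k'+2 → Even m → iteratedDerivWithin m f (Ico 0 r₀) 0 = 0)
    (hode' : ∀ r ∈ Ioo (0:ℝ) r₀,
      r^2 * derivWithin (derivWithin f (Ico 0 r₀)) (Ico 0 r₀) r
        + r * derivWithin f (Ico 0 r₀) r - f r
      = (a/2) * (r^3 * H₁ ((f r)^2))
        + b * (r^2 * (f r + 2*(f r)^3 + (f r)^5))
        + (5/2) * (r^2 * (f r * ((derivWithin f (Ico 0 r₀) r)^2 * H₂ ((f r)^2))))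
        + ((3/2)*(f r)^3 + (1/2)*(f r)^5)) :
    iteratedDerivWithin (2*k'+2) f (Ico 0 r₀) 0 = 0 := by
  have uds : UniqueDiffOn ℝ (Ico (0:ℝ) r₀) := uniqueDiffOn_Ico 0 r₀
  have h0s : (0:ℝ) ∈ Ico (0:ℝ) r₀ := ⟨le_refl 0, hr₀⟩
  set s : Set ℝ := Ico (0:ℝ) r₀ with hs
  set g1 : ℝ → ℝ := derivWithin f s with hg1def
  set g2 : ℝ → ℝ := derivWithin g1 s with hg2def
  have hg1 : ∀ m : ℕ, ContDiffOn ℝ m g1 s := by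
    intro m
    exact (hf (m+1)).derivWithin uds (by exact_mod_cast le_refl ((m:ℕ∞)+1))
  have hg2 : ∀ m : ℕ, ContDiffOn ℝ m g2 s := by
    intro m
    exact (hg1 (m+1)).derivWithin uds (by exact_mod_cast le_refl ((m:ℕ∞)+1))
  set n0 : ℕ := 2*k'+2 with hn0
  -- Taylor polynomials
  set Cf : ℕ → ℝ := fun j => iteratedDerivWithin j f s 0 / (j.factorial : ℝ) with hCf
  set C1 : ℕ → ℝ := fun j => iteratedDerivWithin j g1 s 0 / (j.factorial : ℝ) with hC1
  set C2 : ℕ → ℝ := fun j => iteratedDerivWithin j g2 s 0 / (j.factorial : ℝ) with hC2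
  set pf : ℝ[X] := taylorPoly Cf n0 with hpf
  set pf1 : ℝ[X] := taylorPoly C1 n0 with hpf1
  set pf2 : ℝ[X] := taylorPoly C2 n0 with hpf2
  have hApf : Approx f pf n0 := taylor_approx hr₀ hf n0
  have hApf1 : Approx g1 pf1 n0 := taylor_approx hr₀ hg1 n0
  have hApf2 : Approx g2 pf2 n0 := taylor_approx hr₀ hg2 n0
  -- index shifts
  have hshift1 : ∀ j : ℕ, iteratedDerivWithin j g1 s 0 = iteratedDerivWithin (j+1) f s 0 :=
    fun j => (congrFun iteratedDerivWithin_succ' 0).symm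
  have hshift2 : ∀ j : ℕ, iteratedDerivWithin j g2 s 0 = iteratedDerivWithin (j+2) f s 0 := by
    intro j
    rw [show j+2 = (j+1)+1 by omega, iteratedDerivWithin_succ',
      ← hg1def, iteratedDerivWithin_succ', ← hg2def]
  -- coefficient vanishing from the induction hypothesis
  have hCfeven : ∀ m, m < n0 → m % 2 = 0 → Cf m = 0 := by
    intro m hm hpar
    rw [hCf]
    simp only []
    rw [IH m hm (Nat.even_iff.mpr hpar), zero_div]
  have hCf0 : Cf 0 = 0 := hCfeven 0 (by omega) (by omega)
  -- pf = d * X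
  have hpfc0 : pf.coeff 0 = 0 := by rw [hpf, coeff_taylorPoly]; simpa using hCf0
  set d : ℝ[X] := pf.divX with hd
  have hpfd : pf = d * X := by
    conv_lhs => rw [← Polynomial.X_mul_divX_add pf]
    rw [hpfc0]
    simp [hd, mul_comm]
  -- parity facts
  have hEpd : Ep (2*k'+1) d := by
    intro m hm hodd
    rw [hd, Polynomial.coeff_divX, hpf, coeff_taylorPoly]
    split_ifs with h
    · exact hCfeven (m+1) (by omega) (by have := Nat.odd_iff.mp hodd; omega)
    · rfl
  have hEppf1 : Ep (2*k'+1) pf1 := by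
    intro m hm hodd
    rw [hpf1, coeff_taylorPoly]
    split_ifs with h
    · rw [hC1]
      simp only []
      rw [hshift1 m, IH (m+1) (by omega) (Nat.even_iff.mpr (by have := Nat.odd_iff.mp hodd; omega)),
        zero_div]
    · rfl
  have hEpX2 : ∀ N : ℕ, Ep N ((X:ℝ[X])^2) := by
    intro N m hm hodd
    rw [Polynomial.coeff_X_pow]
    have : m ≠ 2 := by have := Nat.odd_iff.mp hodd; omega
    simp [this]
  have hEppf2sq : Ep (2*k'+1) (pf^2) := by
    have hrw : pf^2 = d^2 * X^2 := by rw [hpfd]; ring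
    rw [hrw]
    exact (hEpd.pow 2).mul (hEpX2 _)
  -- limit facts
  have hpfeval0 : pf.eval 0 = 0 := by
    rw [← Polynomial.coeff_zero_eq_eval_zero]; exact hpfc0
  have hftend : Tendsto f (𝓝[>] (0:ℝ)) (𝓝 0) := by
    have := hApf.tendsto; rwa [hpfeval0] at this
  have hsqtend : Tendsto (fun r => (f r)^2) (𝓝[>] (0:ℝ)) (𝓝 0) := by
    have := hftend.pow 2
    simpa using this
  have hmem : ∀ᶠ r in 𝓝[>] (0:ℝ), (f r)^2 ∈ Icc (0:ℝ) 1 := by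
    filter_upwards [hsqtend.eventually_le_const (zero_lt_one)] with r hle
    exact ⟨sq_nonneg _, hle⟩
  -- big-O facts
  have hOf : f =O[𝓝[>] (0:ℝ)] fun r => r := by
    have h1 : (fun r => f r - pf.eval r) =O[𝓝[>] (0:ℝ)] fun r => r := by
      refine hApf.isBigO.trans (IsBigO.of_bound 1 ?_)
      filter_upwards [Ioo_mem_nhdsGT (zero_lt_one)] with r hr
      simp only [Real.norm_eq_abs, one_mul]
      rw [abs_of_pos (pow_pos hr.1 n0), abs_of_pos hr.1]
      calc r ^ n0 ≤ r ^ 1 := pow_le_pow_of_le_one hr.1.le hr.2.le (by omega)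
        _ = r := pow_one r
    have h2 : (fun r : ℝ => pf.eval r) =O[𝓝[>] (0:ℝ)] fun r => r := by
      have hde : ∀ r : ℝ, pf.eval r = d.eval r * r := by
        intro r; rw [hpfd]; simp
      have hdt : Tendsto (fun r : ℝ => d.eval r) (𝓝[>] (0:ℝ)) (𝓝 (d.eval 0)) :=
        (d.continuous_aeval.tendsto 0).mono_left nhdsWithin_le_nhds
      have := (hdt.isBigO_one ℝ).mul (isBigO_refl (fun r : ℝ => r) (𝓝[>] (0:ℝ)))
      refine IsBigO.trans ?_ (this.congr (fun r => rfl) (fun r => by ring))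
      exact (isBigO_refl _ _).congr (fun r => (hde r).symm) (fun r => rfl)
    have := h1.add h2
    refine IsBigO.trans ?_ this
    exact (isBigO_refl _ _).congr (fun r => by ring) (fun r => rfl)
  have hOsq : (fun r => (f r)^2) =O[𝓝[>] (0:ℝ)] fun r => r^2 := by
    have := hOf.mul hOf
    refine IsBigO.trans ?_ (this.trans ?_)
    · exact (isBigO_refl _ _).congr (fun r => by ring) (fun r => rfl)
    · exact (isBigO_refl _ _).congr (fun r => by ring) (fun r => rfl)
  -- compositions
  obtain ⟨q₁, hAq₁, hq₁par⟩ := approx_comp contDiffOn_H₁ (hApf.pow 2) hmem hOsq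
  obtain ⟨q₂, hAq₂, hq₂par⟩ := approx_comp contDiffOn_H₂ (hApf.pow 2) hmem hOsq
  have hEpq₁ : Ep (2*k'+1) q₁ := hq₁par _ hEppf2sq
  have hEpq₂ : Ep (2*k'+1) q₂ := hq₂par _ hEppf2sq
  -- basic approximations for powers of r
  have hA1 : Approx (fun r : ℝ => r) X n0 :=
    approx_of_eventuallyEq (by filter_upwards with r; simp)
  have hA2 : Approx (fun r : ℝ => r^2) (X^2) n0 :=
    approx_of_eventuallyEq (by filter_upwards with r; simp)
  have hA3 : Approx (fun r : ℝ => r^3) (X^3) n0 :=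
    approx_of_eventuallyEq (by filter_upwards with r; simp)
  -- assemble both sides
  set L : ℝ → ℝ := fun r => r^2 * g2 r + r * g1 r - f r with hL
  set P : ℝ[X] := (X^2 * pf2 + X * pf1) - pf with hP
  have hAL : Approx L P n0 := ((hA2.mul hApf2).add (hA1.mul hApf1)).sub hApf
  set R : ℝ → ℝ := fun r =>
      (a/2) * (r^3 * H₁ ((f r)^2))
      + b * (r^2 * (f r + 2*(f r)^3 + (f r)^5))
      + (5/2) * (r^2 * (f r * ((g1 r)^2 * H₂ ((f r)^2))))
      + ((3/2)*(f r)^3 + (1/2)*(f r)^5) with hR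
  set Q : ℝ[X] :=
      C (a/2) * (X^3 * q₁)
      + C b * (X^2 * (pf + C 2 * pf^3 + pf^5))
      + C (5/2) * (X^2 * (pf * (pf1^2 * q₂)))
      + (C (3/2) * pf^3 + C (1/2) * pf^5) with hQ
  have hAR : Approx R Q n0 := by
    refine (((Approx.const_mul _ (hA3.mul hAq₁)).add
      (Approx.const_mul _ (hA2.mul ((hApf.add (Approx.const_mul 2 (hApf.pow 3))).add
        (hApf.pow 5))))).add
      (Approx.const_mul _ (hA2.mul (hApf.mul ((hApf1.pow 2).mul hAq₂))))).add
      ((Approx.const_mul _ (hApf.pow 3)).add (Approx.const_mul _ (hApf.pow 5)))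
  have hLR : ∀ᶠ r in 𝓝[>] (0:ℝ), R r = L r := by
    filter_upwards [Ioo_mem_nhdsGT hr₀] with r hr
    exact (hode' r hr).symm
  have hALQ : Approx L Q n0 := hAR.congr hLR
  -- extract the coefficient identity
  have hco : P.coeff n0 = Q.coeff n0 := approx_unique hAL hALQ n0 le_rfl
  -- compute Q.coeff n0 = 0
  have hQ0 : Q.coeff n0 = 0 := by
    rw [hQ]
    have e1 : ((X:ℝ[X])^3 * q₁).coeff n0 = 0 := by
      rw [mul_comm]
      exact coeff_mul_X_pow_eq_zero hEpq₁ (by intro h; omega)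
    have e2 : ((X:ℝ[X])^2 * (pf + C 2 * pf^3 + pf^5)).coeff n0 = 0 := by
      have hc3 : (pf^3) = d^3 * X^3 := by rw [hpfd]; ring
      have hc5 : (pf^5) = d^5 * X^5 := by rw [hpfd]; ring
      have i1 : (pf.coeff (2*k')) = 0 := by
        rw [hpf, coeff_taylorPoly]
        split_ifs with h
        · exact hCfeven (2*k') (by omega) (by omega)
        · rfl
      have i3 : (pf^3).coeff (2*k') = 0 := by
        rw [hc3]
        exact coeff_mul_X_pow_eq_zero (hEpd.pow 3) (by intro h; omega)
      have i5 : (pf^5).coeff (2*k') = 0 := by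
        rw [hc5]
        exact coeff_mul_X_pow_eq_zero (hEpd.pow 5) (by intro h; omega)
      rw [mul_comm, Polynomial.coeff_mul_X_pow']
      split_ifs with h
      · rw [show n0 - 2 = 2*k' by omega]
        rw [Polynomial.coeff_add, Polynomial.coeff_add, Polynomial.coeff_C_mul, i1, i3, i5]
        ring
      · rfl
    have e3 : ((X:ℝ[X])^2 * (pf * (pf1^2 * q₂))).coeff n0 = 0 := by
      have hrw : (X:ℝ[X])^2 * (pf * (pf1^2 * q₂)) = (d * (pf1^2 * q₂)) * X^3 := by
        rw [hpfd]; ring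
      rw [hrw]
      exact coeff_mul_X_pow_eq_zero (hEpd.mul ((hEppf1.pow 2).mul hEpq₂)) (by intro h; omega)
    have e4 : (C (3/2) * pf^3 + C (1/2) * pf^5 : ℝ[X]).coeff n0 = 0 := by
      have hc3 : (pf^3) = d^3 * X^3 := by rw [hpfd]; ring
      have hc5 : (pf^5) = d^5 * X^5 := by rw [hpfd]; ring
      have i3 : (pf^3).coeff n0 = 0 := by
        rw [hc3]
        exact coeff_mul_X_pow_eq_zero (hEpd.pow 3) (by intro h; omega)
      have i5 : (pf^5).coeff n0 = 0 := by
        rw [hc5]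
        exact coeff_mul_X_pow_eq_zero (hEpd.pow 5) (by intro h; omega)
      rw [Polynomial.coeff_add, Polynomial.coeff_C_mul, Polynomial.coeff_C_mul, i3, i5]
      ring
    rw [Polynomial.coeff_add, Polynomial.coeff_add, Polynomial.coeff_add,
      Polynomial.coeff_C_mul, Polynomial.coeff_C_mul, Polynomial.coeff_C_mul,
      e1, e2, e3, e4]
    ring
  -- compute P.coeff n0
  have A : ℝ := 0
  clear A
  have hP0 : P.coeff n0 = iteratedDerivWithin (2*k'+2) f s 0 / ((2*k').factorial : ℝ)
      + iteratedDerivWithin (2*k'+2) f s 0 / ((2*k'+1).factorial : ℝ)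
      - iteratedDerivWithin (2*k'+2) f s 0 / ((2*k'+2).factorial : ℝ) := by
    rw [hP, Polynomial.coeff_sub, Polynomial.coeff_add]
    have j2 : ((X:ℝ[X])^2 * pf2).coeff n0
        = iteratedDerivWithin (2*k'+2) f s 0 / ((2*k').factorial : ℝ) := by
      rw [mul_comm, Polynomial.coeff_mul_X_pow']
      rw [if_pos (by omega : 2 ≤ n0), show n0 - 2 = 2*k' by omega]
      rw [hpf2, coeff_taylorPoly, if_pos (by omega : 2*k' ≤ n0)]
      rw [hC2]
      simp only []
      rw [hshift2 (2*k')]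
    have j1 : ((X:ℝ[X]) * pf1).coeff n0
        = iteratedDerivWithin (2*k'+2) f s 0 / ((2*k'+1).factorial : ℝ) := by
      have : (X:ℝ[X]) * pf1 = pf1 * X^1 := by ring
      rw [this, Polynomial.coeff_mul_X_pow']
      rw [if_pos (by omega : 1 ≤ n0), show n0 - 1 = 2*k'+1 by omega]
      rw [hpf1, coeff_taylorPoly, if_pos (by omega : 2*k'+1 ≤ n0)]
      rw [hC1]
      simp only []
      rw [hshift1 (2*k'+1)]
    have j0 : pf.coeff n0
        = iteratedDerivWithin (2*k'+2) f s 0 / ((2*k'+2).factorial : ℝ) := by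
      rw [hpf, coeff_taylorPoly, if_pos (le_refl n0)]
    rw [j2, j1, j0]
  -- conclude
  have hAzero : iteratedDerivWithin (2*k'+2) f s 0 = 0 := by
    set A : ℝ := iteratedDerivWithin (2*k'+2) f s 0 with hA
    have heq : A / ((2*k').factorial : ℝ) + A / ((2*k'+1).factorial : ℝ)
        - A / ((2*k'+2).factorial : ℝ) = 0 := by
      have := hco
      rw [hQ0, hP0] at this
      linarith
    have hF0 : (0:ℝ) < ((2*k').factorial : ℝ) := by exact_mod_cast (2*k').factorial_pos
    have hF1 : (0:ℝ) < ((2*k'+1).factorial : ℝ) := by exact_mod_cast (2*k'+1).factorial_pos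
    have hF2 : (0:ℝ) < ((2*k'+2).factorial : ℝ) := by exact_mod_cast (2*k'+2).factorial_pos
    have hle : ((2*k'+1).factorial : ℝ) ≤ ((2*k'+2).factorial : ℝ) := by
      exact_mod_cast Nat.factorial_le (by omega)
    have hcpos : (0:ℝ) < 1 / ((2*k').factorial : ℝ) + 1 / ((2*k'+1).factorial : ℝ)
        - 1 / ((2*k'+2).factorial : ℝ) := by
      have h1 : 1 / ((2*k'+2).factorial : ℝ) ≤ 1 / ((2*k'+1).factorial : ℝ) :=
        one_div_le_one_div_of_le hF1 hle
      have h2 : (0:ℝ) < 1 / ((2*k').factorial : ℝ) := by positivity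
      linarith
    have hfact : A * (1 / ((2*k').factorial : ℝ) + 1 / ((2*k'+1).factorial : ℝ)
        - 1 / ((2*k'+2).factorial : ℝ)) = 0 := by
      rw [← heq]; ring
    rcases mul_eq_zero.mp hfact with h | h
    · exact h
    · exact absurd h (ne_of_gt hcpos)
  exact hAzero


end OddVanish

open OddVanish Real


/-- **Vanishing of all odd derivatives at the axis.** If `u` is smooth on `[0,r₀)` with
`u'(0) = 0` and solves the reduced Euler–Lagrange ODE (with vanishing residue) on
`(0,r₀)`, then all odd (one-sided) derivatives of `u` vanish at `0`. -/
theorem odd_derivatives_vanish_at_axis (r₀ a b : ℝ) (hr₀ : 0 < r₀) (u : ℝ → ℝ)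
    (hu : ContDiffOn ℝ (⊤ : ℕ∞) u (Set.Ico 0 r₀))
    (hu0 : derivWithin u (Set.Ico 0 r₀) 0 = 0)
    (hode : ∀ r ∈ Set.Ioo (0:ℝ) r₀,
      deriv (deriv (deriv u)) r + deriv (fun s => deriv u s / s) r
        = (1/2) * (1 + (deriv u r) ^ 2) ^ ((5:ℝ)/2) * a * r
          + b * (1 + (deriv u r) ^ 2) ^ 2 * deriv u r
          + (5 * deriv u r / (2 * (1 + (deriv u r) ^ 2))) * (deriv (deriv u) r) ^ 2
          + ((deriv u r) ^ 3 / (2 * r ^ 2)) * (3 + (deriv u r) ^ 2)) :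
    ∀ k : ℕ, iteratedDerivWithin (2 * k + 1) u (Set.Ico 0 r₀) 0 = 0 := by
  have uds : UniqueDiffOn ℝ (Ico (0:ℝ) r₀) := uniqueDiffOn_Ico 0 r₀
  have h0s : (0:ℝ) ∈ Ico (0:ℝ) r₀ := ⟨le_refl 0, hr₀⟩
  set s : Set ℝ := Ico (0:ℝ) r₀ with hs
  set f : ℝ → ℝ := derivWithin u s with hfdef
  set g1 : ℝ → ℝ := derivWithin f s with hg1def
  set g2 : ℝ → ℝ := derivWithin g1 s with hg2def
  have hf : ∀ m : ℕ, ContDiffOn ℝ m f s := by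
    intro m
    have hu' : ContDiffOn ℝ ((m+1 : ℕ)) u s := hu.of_le (by exact_mod_cast le_top)
    exact hu'.derivWithin uds (by exact_mod_cast le_refl ((m:ℕ∞)+1))
  have hg1 : ∀ m : ℕ, ContDiffOn ℝ m g1 s := by
    intro m
    exact (hf (m+1)).derivWithin uds (by exact_mod_cast le_refl ((m:ℕ∞)+1))
  have hf0 : f 0 = 0 := hu0
  -- pointwise identities on the interior
  have hloc : ∀ r ∈ Ioo (0:ℝ) r₀, s ∈ nhds r := by
    intro r hr
    exact Ico_mem_nhds hr.1 hr.2
  have hfr : ∀ r ∈ Ioo (0:ℝ) r₀, deriv u r = f r :=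
    fun r hr => (derivWithin_of_mem_nhds (hloc r hr)).symm
  have hfev : ∀ r ∈ Ioo (0:ℝ) r₀, deriv u =ᶠ[nhds r] f := by
    intro r hr
    filter_upwards [isOpen_Ioo.mem_nhds hr] with x hx
    exact hfr x hx
  have hg1r : ∀ r ∈ Ioo (0:ℝ) r₀, deriv (deriv u) r = g1 r := by
    intro r hr
    rw [(hfev r hr).deriv_eq, hg1def, ← derivWithin_of_mem_nhds (hloc r hr)]
  have hg1ev : ∀ r ∈ Ioo (0:ℝ) r₀, deriv (deriv u) =ᶠ[nhds r] g1 := by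
    intro r hr
    filter_upwards [isOpen_Ioo.mem_nhds hr] with x hx
    exact hg1r x hx
  have hg2r : ∀ r ∈ Ioo (0:ℝ) r₀, deriv (deriv (deriv u)) r = g2 r := by
    intro r hr
    rw [(hg1ev r hr).deriv_eq, hg2def, ← derivWithin_of_mem_nhds (hloc r hr)]
  have hdifff : ∀ r ∈ Ioo (0:ℝ) r₀, DifferentiableAt ℝ f r := by
    intro r hr
    exact (((hf 1).contDiffAt (hloc r hr)).differentiableAt (by simp))
  have hdivr : ∀ r ∈ Ioo (0:ℝ) r₀,
      deriv (fun t => deriv u t / t) r = (g1 r * r - f r) / r^2 := by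
    intro r hr
    have hev : (fun t => deriv u t / t) =ᶠ[nhds r] (fun t => f t / t) := by
      filter_upwards [isOpen_Ioo.mem_nhds hr] with x hx
      rw [hfr x hx]
    rw [hev.deriv_eq]
    rw [deriv_fun_div (hdifff r hr) differentiableAt_fun_id (ne_of_gt hr.1)]
    rw [deriv_id'']
    rw [show deriv f r = g1 r from (derivWithin_of_mem_nhds (hloc r hr)).symm]
    ring_nf
  -- the transformed ODE
  have hode' : ∀ r ∈ Ioo (0:ℝ) r₀,
      r^2 * g2 r + r * g1 r - f r
      = (a/2) * (r^3 * H₁ ((f r)^2))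
        + b * (r^2 * (f r + 2*(f r)^3 + (f r)^5))
        + (5/2) * (r^2 * (f r * ((g1 r)^2 * H₂ ((f r)^2))))
        + ((3/2)*(f r)^3 + (1/2)*(f r)^5) := by
    intro r hr
    have heq := hode r hr
    rw [hfr r hr, hg1r r hr, hg2r r hr, hdivr r hr] at heq
    have hr0 : r ≠ 0 := ne_of_gt hr.1
    have h1f : (1:ℝ) + (f r)^2 ≠ 0 := by positivity
    have hH1 : H₁ ((f r)^2) = (1 + (f r)^2) ^ ((5:ℝ)/2) := rfl
    have hH2 : H₂ ((f r)^2) = (1 + (f r)^2)⁻¹ := rfl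
    rw [hH1, hH2]
    calc r^2 * g2 r + r * g1 r - f r
        = (g2 r + (g1 r * r - f r)/r^2) * r^2 := by field_simp; ring
      _ = ((1/2) * (1 + (f r) ^ 2) ^ ((5:ℝ)/2) * a * r
          + b * (1 + (f r) ^ 2) ^ 2 * f r
          + (5 * f r / (2 * (1 + (f r) ^ 2))) * (g1 r) ^ 2
          + ((f r) ^ 3 / (2 * r ^ 2)) * (3 + (f r) ^ 2)) * r^2 := by rw [heq]
      _ = (a/2) * (r^3 * (1 + (f r)^2) ^ ((5:ℝ)/2))
          + b * (r^2 * (f r + 2*(f r)^3 + (f r)^5))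
          + (5/2) * (r^2 * (f r * ((g1 r)^2 * (1 + (f r)^2)⁻¹)))
          + ((3/2)*(f r)^3 + (1/2)*(f r)^5) := by
            field_simp
            ring
  -- main induction
  have main : ∀ k : ℕ, iteratedDerivWithin (2*k) f s 0 = 0 := by
    intro k
    induction k using Nat.strong_induction_on with
    | _ k IHk =>
      rcases Nat.eq_zero_or_pos k with rfl | hk
      · simpa [iteratedDerivWithin_zero] using hf0
      · obtain ⟨k', rfl⟩ : ∃ k', k = k'+1 := ⟨k-1, by omega⟩
        have hIH : ∀ m, m < 2*k'+2 → Even m → iteratedDerivWithin m f s 0 = 0 := by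
          intro m hm hme
          obtain ⟨j, hj⟩ := hme
          rw [show m = 2*j by omega]
          exact IHk j (by omega)
        have := key r₀ a b hr₀ f hf hf0 k' hIH hode'
        rw [show 2*(k'+1) = 2*k'+2 by ring]
        exact this
  intro k
  rw [iteratedDerivWithin_succ']
  exact main k
end

section
/- (ODE regularity at a degenerate endpoint.) Let n ∈ ℕ₀, let u ∈ C¹((0,1)) ∩ C⁰([0,1)) and h ∈ Cⁿ([0,1)) satisfy (x·u(x))' = x·h(x) for all x ∈ (0,1). Then u extends to a function of class C^{n+1}([0,1)). -/
/-!
Let `P k g x = ∫₀¹ sᵏ g(x s) ds = x^-(k+1) ∫₀ˣ tᵏ g(t) dt`. Integrating the equation from `0`,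
where `x u(x) → 0` by continuity of `u`, gives `u = x P 1 h`, hence `u' = h - P 1 h` on `(0,1)`.
Differentiating under the integral sign, `(P k g)' = P (k+1) g'`, so by induction `P k` maps
`Cⁿ([0,1))` to itself. Finally, a function continuous on `[0,1)` whose derivative on `(0,1)` is
the restriction of a `Cⁿ([0,1))` function is `Cⁿ⁺¹([0,1))`.
-/

open Set Filter Topology MeasureTheory intervalIntegral

theorem hasDerivWithinAt_Ico_of_hasDerivAt_Ioo {E : Type*} [NormedAddCommGroup E]
    [NormedSpace ℝ E] {f F : ℝ → E} {a b : ℝ} (hf : ContinuousOn f (Ico a b))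
    (hf' : ∀ x ∈ Ioo a b, HasDerivAt f (F x) x) (hF : ContinuousWithinAt F (Ico a b) a) :
    ∀ x ∈ Ico a b, HasDerivWithinAt f (F x) (Ico a b) x := by
  rintro x ⟨hax, hxb⟩
  rcases hax.eq_or_lt with rfl | hax
  · have hIoo : Ioo a b ∈ 𝓝[>] a := Ioo_mem_nhdsGT hxb
    refine (hasDerivWithinAt_Ici_of_tendsto_deriv
      (fun y hy => (hf' y hy).differentiableAt.differentiableWithinAt)
      ((hf a ⟨le_rfl, hxb⟩).mono Ioo_subset_Ico_self) hIoo ?_).mono Ico_subset_Ici_self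
    refine ((hF.mono Ioo_subset_Ico_self).tendsto.mono_left ?_).congr' ?_
    · exact nhdsWithin_le_iff.mpr hIoo
    · filter_upwards [hIoo] with y hy using (hf' y hy).deriv.symm
  · exact (hf' x ⟨hax, hxb⟩).hasDerivWithinAt

theorem contDiffOn_succ_Ico_of_hasDerivAt_Ioo {E : Type*} [NormedAddCommGroup E]
    [NormedSpace ℝ E] {f F : ℝ → E} {a b : ℝ} {n : ℕ∞} (hf : ContinuousOn f (Ico a b))
    (hf' : ∀ x ∈ Ioo a b, HasDerivAt f (F x) x) (hF : ContDiffOn ℝ n F (Ico a b)) :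
    ContDiffOn ℝ (n + 1) f (Ico a b) := by
  rcases lt_or_ge a b with hab | hba
  · have hderiv := hasDerivWithinAt_Ico_of_hasDerivAt_Ioo hf hf' (hF.continuousOn a ⟨le_rfl, hab⟩)
    rw [contDiffOn_succ_iff_derivWithin (uniqueDiffOn_Ico a b)]
    refine ⟨fun x hx => (hderiv x hx).differentiableWithinAt, by simp, hF.congr fun x hx => ?_⟩
    exact (hderiv x hx).derivWithin (uniqueDiffOn_Ico a b x hx)
  · simp [Ico_eq_empty_of_le hba]

/-- `x ^ -(k + 1) * ∫ t in 0..x, t ^ k * g t` (see `pow_succ_mul_scaledMoment`), written so that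
it has no singularity at `x = 0`. -/
noncomputable def scaledMoment (k : ℕ) (g : ℝ → ℝ) (x : ℝ) : ℝ :=
  ∫ s in (0 : ℝ)..1, s ^ k * g (x * s)

theorem pow_succ_mul_scaledMoment (k : ℕ) (g : ℝ → ℝ) (x : ℝ) :
    x ^ (k + 1) * scaledMoment k g x = ∫ t in (0 : ℝ)..x, t ^ k * g t := by
  have h := smul_integral_comp_mul_left (fun t => t ^ k * g t) x (a := 0) (b := 1)
  simp only [mul_pow, mul_assoc, intervalIntegral.integral_const_mul, smul_eq_mul, mul_zero,
    mul_one] at h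
  rw [← h, scaledMoment, pow_succ]
  ring

theorem continuousOn_scaledMoment_Icc {k : ℕ} {g : ℝ → ℝ} {b : ℝ} (hb : 0 ≤ b)
    (hg : ContinuousOn g (Icc 0 b)) : ContinuousOn (scaledMoment k g) (Icc 0 b) := by
  -- clamping `g` to `[0, b]` does not change `scaledMoment k g` there, but makes it continuous
  set clamp : ℝ → ℝ := fun y => max 0 (min b y)
  have hgc : Continuous (g ∘ clamp) :=
    hg.comp_continuous (by fun_prop) fun y => ⟨le_max_left _ _, max_le hb (min_le_left _ _)⟩
  have hcont : Continuous (scaledMoment k (g ∘ clamp)) :=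
    continuous_parametric_intervalIntegral_of_continuous'
      ((continuous_snd.pow k).mul (hgc.comp (continuous_fst.mul continuous_snd))) 0 1
  refine hcont.continuousOn.congr fun x hx => integral_congr fun s hs => ?_
  rw [uIcc_of_le zero_le_one] at hs
  have hxs : x * s ≤ b := (mul_le_of_le_one_right hx.1 hs.2).trans hx.2
  simp [clamp, mul_nonneg hx.1 hs.1, hxs]

theorem continuousOn_scaledMoment {k : ℕ} {g : ℝ → ℝ} {c : ℝ} (hg : ContinuousOn g (Ico 0 c)) :
    ContinuousOn (scaledMoment k g) (Ico 0 c) := by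
  intro x hx
  obtain ⟨b, hxb, hbc⟩ := exists_between hx.2
  have hsub : Icc 0 b ⊆ Ico 0 c := Icc_subset_Ico_right hbc
  refine ((continuousOn_scaledMoment_Icc (hx.1.trans hxb.le) (hg.mono hsub)) x
    ⟨hx.1, hxb.le⟩).mono_of_mem_nhdsWithin ?_
  exact mem_nhdsWithin.2 ⟨Iio b, isOpen_Iio, hxb, fun y hy => ⟨hy.2.1, hy.1.le⟩⟩

theorem continuousOn_pow_mul_comp_mul {φ : ℝ → ℝ} {c y : ℝ} (hφ : ContinuousOn φ (Ico 0 c))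
    (hy : y ∈ Ico 0 c) (j : ℕ) : ContinuousOn (fun s => s ^ j * φ (y * s)) (Icc 0 1) :=
  (continuousOn_pow j).mul (hφ.comp (continuousOn_const.mul continuousOn_id) fun _ hs =>
    ⟨mul_nonneg hy.1 hs.1, (mul_le_of_le_one_right hy.1 hs.2).trans_lt hy.2⟩)

theorem hasDerivAt_scaledMoment {k : ℕ} {g : ℝ → ℝ} {c x : ℝ} (hg : ContDiffOn ℝ 1 g (Ico 0 c))
    (hx : x ∈ Ioo 0 c) :
    HasDerivAt (scaledMoment k g) (scaledMoment (k + 1) (derivWithin g (Ico 0 c)) x) x := by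
  set g' := derivWithin g (Ico 0 c)
  obtain ⟨b, hxb, hbc⟩ := exists_between hx.2
  have hg'c : ContinuousOn g' (Ico 0 c) :=
    hg.continuousOn_derivWithin (uniqueDiffOn_Ico 0 c) le_rfl
  obtain ⟨M, hM⟩ : ∃ M, ∀ y ∈ Icc 0 b, ‖g' y‖ ≤ M :=
    isCompact_Icc.exists_bound_of_continuousOn (hg'c.mono (Icc_subset_Ico_right hbc))
  have hmem : ∀ y ∈ Ioo 0 b, y ∈ Ico 0 c := fun y hy => ⟨hy.1.le, hy.2.trans hbc⟩
  have hmul : ∀ y ∈ Ioo 0 b, ∀ s ∈ Ioc (0 : ℝ) 1, y * s ∈ Ioo 0 b := fun y hy s hs =>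
    ⟨mul_pos hy.1 hs.1, (mul_le_of_le_one_right hy.1.le hs.2).trans_lt hy.2⟩
  have hderiv : ∀ y ∈ Ioo 0 c, HasDerivAt g (g' y) y := fun y hy =>
    ((hg.differentiableOn one_ne_zero y ⟨hy.1.le, hy.2⟩).hasDerivWithinAt).hasDerivAt
      (Ico_mem_nhds hy.1 hy.2)
  have key := hasDerivAt_integral_of_dominated_loc_of_deriv_le (μ := volume) (a := 0) (b := 1)
    (F := fun y s => s ^ k * g (y * s)) (F' := fun y s => s ^ (k + 1) * g' (y * s))
    (x₀ := x) (bound := fun _ => M) (Ioo_mem_nhds hx.1 hxb) ?_ ?_ ?_ ?_ ?_ ?_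
  · exact key.2
  all_goals try rw [uIoc_of_le zero_le_one]
  · filter_upwards [Ioo_mem_nhds hx.1 hxb] with y hy
    exact ((continuousOn_pow_mul_comp_mul hg.continuousOn (hmem y hy) k).mono
      Ioc_subset_Icc_self).aestronglyMeasurable measurableSet_Ioc
  · exact (continuousOn_pow_mul_comp_mul hg.continuousOn (hmem x ⟨hx.1, hxb⟩) k
      ).intervalIntegrable_of_Icc zero_le_one
  · exact ((continuousOn_pow_mul_comp_mul hg'c (hmem x ⟨hx.1, hxb⟩) (k + 1)).mono
      Ioc_subset_Icc_self).aestronglyMeasurable measurableSet_Ioc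
  · refine ae_of_all _ fun s hs y hy => ?_
    have hys := hmul y hy s hs
    have hs1 : ‖s ^ (k + 1)‖ ≤ 1 := by
      rw [norm_pow, Real.norm_eq_abs, abs_of_pos hs.1]
      exact pow_le_one₀ hs.1.le hs.2
    simpa only [norm_mul, one_mul] using
      mul_le_mul hs1 (hM _ ⟨hys.1.le, hys.2.le⟩) (norm_nonneg _) zero_le_one
  · exact intervalIntegrable_const
  · refine ae_of_all _ fun s hs y hy => ?_
    have hys := hmul y hy s hs
    exact (((hderiv _ ⟨hys.1, hys.2.trans hbc⟩).comp y ((hasDerivAt_id y).mul_const s)).const_mul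
      (s ^ k)).congr_deriv (by ring)

theorem contDiffOn_scaledMoment {n k : ℕ} {g : ℝ → ℝ} {c : ℝ} (hg : ContDiffOn ℝ n g (Ico 0 c)) :
    ContDiffOn ℝ n (scaledMoment k g) (Ico 0 c) := by
  induction n generalizing k g with
  | zero => simpa using continuousOn_scaledMoment hg.continuousOn
  | succ n ih =>
    have hg1 : ContDiffOn ℝ 1 g (Ico 0 c) := hg.of_le (by exact_mod_cast n.succ_pos)
    have hg' := hg.derivWithin (uniqueDiffOn_Ico 0 c) (m := n) (by norm_cast)
    exact_mod_cast contDiffOn_succ_Ico_of_hasDerivAt_Ioo (n := n)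
      (continuousOn_scaledMoment hg.continuousOn) (fun x hx => hasDerivAt_scaledMoment hg1 hx)
      (ih hg')

theorem hasDerivAt_pow_succ_mul_scaledMoment {k : ℕ} {g : ℝ → ℝ} {c y : ℝ}
    (hg : ContinuousOn g (Ico 0 c)) (hy : y ∈ Ioo 0 c) :
    HasDerivAt (fun x => x ^ (k + 1) * scaledMoment k g x) (y ^ k * g y) y := by
  have hcont : ContinuousOn (fun t => t ^ k * g t) (Ico 0 c) := (continuousOn_pow k).mul hg
  simp_rw [pow_succ_mul_scaledMoment]
  refine integral_hasDerivAt_right ?_ ?_ ?_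
  · exact (hcont.mono (Icc_subset_Ico_right hy.2)).intervalIntegrable_of_Icc hy.1.le
  · exact (hcont.mono Ioo_subset_Ico_self).stronglyMeasurableAtFilter isOpen_Ioo y hy
  · exact hcont.continuousAt (Ico_mem_nhds hy.1 hy.2)

theorem eq_mul_scaledMoment_of_hasDerivAt_mul {u h : ℝ → ℝ} {c : ℝ}
    (hu : ContinuousOn u (Ico 0 c)) (hh : ContinuousOn h (Ico 0 c))
    (hd : ∀ x ∈ Ioo 0 c, HasDerivAt (fun y => y * u y) (x * h x) x) :
    ∀ x ∈ Ioo 0 c, u x = x * scaledMoment 1 h x := by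
  set F : ℝ → ℝ := fun y => y * u y - y ^ 2 * scaledMoment 1 h y
  have hF : ContinuousOn F (Ico 0 c) :=
    (continuousOn_id.mul hu).sub ((continuousOn_pow 2).mul (continuousOn_scaledMoment hh))
  have hF' : ∀ y ∈ Ioo 0 c, HasDerivAt F 0 y := fun y hy => by
    simpa using (hd y hy).fun_sub (hasDerivAt_pow_succ_mul_scaledMoment (k := 1) hh hy)
  intro x hx
  obtain ⟨-, -, hslope⟩ := exists_hasDerivAt_eq_slope F (fun _ => 0) hx.1
    (hF.mono (Icc_subset_Ico_right hx.2)) fun y hy => hF' y ⟨hy.1, hy.2.trans hx.2⟩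
  have hFx : x * (u x - x * scaledMoment 1 h x) = 0 := by
    simp only [F, zero_pow two_ne_zero, zero_mul, sub_zero, sub_self] at hslope
    rw [eq_comm, div_eq_zero_iff, or_iff_left hx.1.ne'] at hslope
    linear_combination hslope
  exact sub_eq_zero.1 ((mul_eq_zero.1 hFx).resolve_left hx.1.ne')

theorem hasDerivAt_of_hasDerivAt_id_mul {u : ℝ → ℝ} {x a : ℝ} (hx : x ≠ 0)
    (hd : HasDerivAt (fun y => y * u y) a x) : HasDerivAt u ((a - u x) / x) x := by
  have hq := hd.div (hasDerivAt_id x) hx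
  refine (hq.congr_of_eventuallyEq ?_).congr_deriv ?_
  · filter_upwards [eventually_ne_nhds hx] with y hy
    simp [hy]
  · simp only [id]
    field_simp

/-- **ODE regularity at a degenerate endpoint.** If `u ∈ C¹((0,1)) ∩ C⁰([0,1))`,
`h ∈ Cⁿ([0,1))` and `(x·u(x))' = x·h(x)` on `(0,1)`, then `u` is of class
`C^{n+1}([0,1))`. -/
theorem ode_regularity_at_degenerate_endpoint (n : ℕ) (u h : ℝ → ℝ)
    (hu1 : ContDiffOn ℝ 1 u (Set.Ioo (0:ℝ) 1))
    (hu0 : ContinuousOn u (Set.Ico (0:ℝ) 1))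
    (hh : ContDiffOn ℝ n h (Set.Ico (0:ℝ) 1))
    (hode : ∀ x ∈ Set.Ioo (0:ℝ) 1, deriv (fun y => y * u y) x = x * h x) :
    ContDiffOn ℝ (n + 1) u (Set.Ico (0:ℝ) 1) := by
  have hd : ∀ x ∈ Ioo (0 : ℝ) 1, HasDerivAt (fun y => y * u y) (x * h x) x := fun x hx => by
    have hux : DifferentiableAt ℝ u x :=
      (hu1.differentiableOn one_ne_zero x hx).differentiableAt (Ioo_mem_nhds hx.1 hx.2)
    rw [← hode x hx]
    exact (differentiableAt_id.mul hux).hasDerivAt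
  have hrep := eq_mul_scaledMoment_of_hasDerivAt_mul hu0 hh.continuousOn hd
  have hu' : ∀ x ∈ Ioo (0 : ℝ) 1, HasDerivAt u (h x - scaledMoment 1 h x) x := fun x hx => by
    convert hasDerivAt_of_hasDerivAt_id_mul hx.1.ne' (hd x hx) using 1
    rw [hrep x hx]
    field_simp [hx.1.ne']
  exact_mod_cast contDiffOn_succ_Ico_of_hasDerivAt_Ioo (n := n) hu0 hu'
    (hh.sub (contDiffOn_scaledMoment hh))
end

section
/- (Uniform second-derivative bound for a singular ODE.) Let r₀ > 0, f ∈ C⁰([0,r₀]) ∩ C¹((0,r₀]) and w ∈ C²([0,r₀]) satisfy w''(r) + (w(r)/r)' = f(r) for r ∈ (0,r₀]. Then |w''(r)| ≤ (4/3)·sup_{0 ≤ ρ ≤ r} |f(ρ)| for all r ∈ [0,r₀], and consequently |w'(r)| ≤ |w'(r₀)| + (4/3)·r₀·sup_{0 ≤ ρ ≤ r₀} |f(ρ)|. -/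
/-!
Multiplying the equation by `r²` gives `(r² w' - r w)' = r² f`, and `r² w' - r w` vanishes at `0`,
so `|r² w' - r w| ≤ M r³ / 3` with `M = sup_{[0,r]} |f|`. Since `(w/r)' = (r² w' - r w) / r³`,
the equation yields `|w''| ≤ |f| + M / 3 ≤ 4M/3` on `(0, r₀]`; at `0` the bound follows by
continuity of `w''` and of `M` at `0`. The mean value theorem then bounds `w'`.
-/

open Set Filter Topology

theorem tendsto_sSup_image_Icc_nhdsGE {α β : Type*} [LinearOrder α] [TopologicalSpace α]
    [OrderTopology α] [NoMaxOrder α] [ConditionallyCompleteLinearOrder β] [TopologicalSpace β]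
    [OrderTopology β] [NoMaxOrder β] [DenselyOrdered β] {g : α → β} {a : α}
    (hg : ContinuousWithinAt g (Ici a) a) :
    Tendsto (fun r => sSup (g '' Icc a r)) (𝓝[≥] a) (𝓝 (g a)) := by
  have key : ∀ c, g a < c →
      ∀ᶠ r in 𝓝[≥] a, g a ≤ sSup (g '' Icc a r) ∧ sSup (g '' Icc a r) ≤ c := by
    intro c hc
    obtain ⟨u, hu, hsub⟩ := mem_nhdsGE_iff_exists_Ico_subset.1 (hg.eventually (gt_mem_nhds hc))
    filter_upwards [Ico_mem_nhdsGE hu] with r hr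
    have hle : ∀ y ∈ g '' Icc a r, y ≤ c := by
      rintro _ ⟨ρ, hρ, rfl⟩
      exact (hsub ⟨hρ.1, hρ.2.trans_lt hr.2⟩).le
    have ha : g a ∈ g '' Icc a r := mem_image_of_mem g (left_mem_Icc.2 hr.1)
    exact ⟨le_csSup ⟨c, hle⟩ ha, csSup_le ⟨_, ha⟩ hle⟩
  refine tendsto_order.2 ⟨fun b hb => ?_, fun b hb => ?_⟩
  · obtain ⟨c, hc⟩ := exists_gt (g a)
    exact (key c hc).mono fun r hr => hb.trans_le hr.1
  · obtain ⟨c, hac, hcb⟩ := exists_between hb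
    exact (key c hac).mono fun r hr => hr.2.trans_lt hcb

theorem abs_le_of_hasDerivAt_eq_sq_mul {h g : ℝ → ℝ} {r M : ℝ} (hr : 0 ≤ r)
    (hh : ContinuousOn h (Icc 0 r)) (h0 : h 0 = 0)
    (hderiv : ∀ x ∈ Ioo 0 r, HasDerivAt h (x ^ 2 * g x) x) (hg : ContinuousOn g (Icc 0 r))
    (hM : ∀ x ∈ Icc 0 r, |g x| ≤ M) : |h r| ≤ M * r ^ 3 / 3 := by
  have hint : IntervalIntegrable (fun x => x ^ 2 * g x) MeasureTheory.volume 0 r :=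
    ((continuousOn_pow 2).mul hg).intervalIntegrable_of_Icc hr
  have hftc := intervalIntegral.integral_eq_sub_of_hasDerivAt_of_le hr hh hderiv hint
  rw [h0, sub_zero] at hftc
  calc |h r| = ‖∫ x in (0)..r, x ^ 2 * g x‖ := by rw [hftc, Real.norm_eq_abs]
    _ ≤ ∫ x in (0)..r, M * x ^ 2 := by
      have hcont : Continuous fun x : ℝ => M * x ^ 2 := continuous_const.mul (continuous_pow 2)
      refine intervalIntegral.norm_integral_le_of_norm_le hr (Eventually.of_forall ?_)
        (hcont.intervalIntegrable 0 r)
      intro x hx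
      rw [Real.norm_eq_abs, abs_mul, abs_of_nonneg (sq_nonneg x), mul_comm]
      exact mul_le_mul_of_nonneg_right (hM x (Ioc_subset_Icc_self hx)) (sq_nonneg x)
    _ = M * r ^ 3 / 3 := by
      simp only [intervalIntegral.integral_const_mul, integral_pow]
      ring

section SingularODE

variable {r₀ r : ℝ} {f w : ℝ → ℝ}

theorem sq_mul_derivWithin_derivWithin_eq_of_ode (hw : DifferentiableOn ℝ w (Icc 0 r₀))
    (hr : r ∈ Ioc 0 r₀)
    (hode : derivWithin (derivWithin w (Icc 0 r₀)) (Icc 0 r₀) r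
        + derivWithin (fun s => w s / s) (Icc 0 r₀) r = f r) :
    r ^ 2 * derivWithin (derivWithin w (Icc 0 r₀)) (Icc 0 r₀) r
      = r ^ 2 * f r - (r * derivWithin w (Icc 0 r₀) r - w r) := by
  have hrI : r ∈ Icc 0 r₀ := Ioc_subset_Icc_self hr
  have hquot : derivWithin (fun s => w s / s) (Icc 0 r₀) r
      = (derivWithin w (Icc 0 r₀) r * r - w r * 1) / r ^ 2 :=
    ((hw r hrI).hasDerivWithinAt.div (hasDerivWithinAt_id r _) hr.1.ne').derivWithin
      ((uniqueDiffOn_Icc (hr.1.trans_le hr.2)) r hrI)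
  rw [← hode, hquot, mul_add, mul_div_cancel₀ _ (pow_ne_zero 2 hr.1.ne')]
  ring

theorem hasDerivAt_sq_mul_derivWithin_sub_mul_of_ode (hw : DifferentiableOn ℝ w (Icc 0 r₀))
    (hw' : DifferentiableOn ℝ (derivWithin w (Icc 0 r₀)) (Icc 0 r₀)) (hr : r ∈ Ioo 0 r₀)
    (hode : derivWithin (derivWithin w (Icc 0 r₀)) (Icc 0 r₀) r
        + derivWithin (fun s => w s / s) (Icc 0 r₀) r = f r) :
    HasDerivAt (fun s => s ^ 2 * derivWithin w (Icc 0 r₀) s - s * w s) (r ^ 2 * f r) r := by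
  have hI : Icc 0 r₀ ∈ 𝓝 r := Icc_mem_nhds hr.1 hr.2
  have hrI : r ∈ Icc 0 r₀ := Ioo_subset_Icc_self hr
  have hsq := sq_mul_derivWithin_derivWithin_eq_of_ode hw (Ioo_subset_Ioc_self hr) hode
  refine (((hasDerivAt_pow 2 r).fun_mul ((hw' r hrI).hasDerivWithinAt.hasDerivAt hI)).fun_sub
    ((hasDerivAt_id' r).fun_mul ((hw r hrI).hasDerivWithinAt.hasDerivAt hI))).congr_deriv ?_
  push_cast
  linear_combination hsq

theorem abs_derivWithin_derivWithin_le_of_ode_of_pos (hf : ContinuousOn f (Icc 0 r₀))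
    (hw : ContDiffOn ℝ 2 w (Icc 0 r₀))
    (hode : ∀ r ∈ Ioc 0 r₀, derivWithin (derivWithin w (Icc 0 r₀)) (Icc 0 r₀) r
        + derivWithin (fun s => w s / s) (Icc 0 r₀) r = f r)
    (hr : r ∈ Ioc 0 r₀) :
    |derivWithin (derivWithin w (Icc 0 r₀)) (Icc 0 r₀) r|
      ≤ 4 / 3 * sSup ((fun ρ => |f ρ|) '' Icc 0 r) := by
  have hU : UniqueDiffOn ℝ (Icc 0 r₀) := uniqueDiffOn_Icc (hr.1.trans_le hr.2)
  have hwd : DifferentiableOn ℝ w (Icc 0 r₀) := hw.differentiableOn (by norm_num)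
  have hw'd : DifferentiableOn ℝ (derivWithin w (Icc 0 r₀)) (Icc 0 r₀) :=
    (hw.derivWithin hU (m := 1) (by norm_num)).differentiableOn one_ne_zero
  have hsub : Icc 0 r ⊆ Icc 0 r₀ := Icc_subset_Icc_right hr.2
  set M := sSup ((fun ρ => |f ρ|) '' Icc 0 r)
  have hfM : ∀ x ∈ Icc 0 r, |f x| ≤ M := fun x hx => (hf.mono hsub).abs.le_sSup_image_Icc hx
  have hcont : ContinuousOn (fun s => s ^ 2 * derivWithin w (Icc 0 r₀) s - s * w s) (Icc 0 r) :=
    (((continuousOn_pow 2).mul hw'd.continuousOn).sub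
      (continuousOn_id.mul hwd.continuousOn)).mono hsub
  have hh : |r ^ 2 * derivWithin w (Icc 0 r₀) r - r * w r| ≤ M * r ^ 3 / 3 :=
    abs_le_of_hasDerivAt_eq_sq_mul hr.1.le hcont (by simp)
      (fun x hx => hasDerivAt_sq_mul_derivWithin_sub_mul_of_ode hwd hw'd
        ⟨hx.1, hx.2.trans_le hr.2⟩ (hode x ⟨hx.1, hx.2.le.trans hr.2⟩))
      (hf.mono hsub) hfM
  have hsq := sq_mul_derivWithin_derivWithin_eq_of_ode hwd hr (hode r hr)
  have hr3 : 0 < r ^ 3 := pow_pos hr.1 3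
  refine le_of_mul_le_mul_left ?_ hr3
  calc r ^ 3 * |derivWithin (derivWithin w (Icc 0 r₀)) (Icc 0 r₀) r|
      = |r ^ 3 * f r - (r ^ 2 * derivWithin w (Icc 0 r₀) r - r * w r)| := by
        rw [← abs_of_pos hr3, ← abs_mul, abs_of_pos hr3]
        congr 1
        linear_combination r * hsq
    _ ≤ |r ^ 3 * f r| + |r ^ 2 * derivWithin w (Icc 0 r₀) r - r * w r| := abs_sub _ _
    _ ≤ r ^ 3 * M + M * r ^ 3 / 3 := by
        rw [abs_mul, abs_of_pos hr3]
        gcongr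
        exact hfM r (right_mem_Icc.2 hr.1.le)
    _ = r ^ 3 * (4 / 3 * M) := by ring

theorem abs_derivWithin_derivWithin_le_of_ode (hr₀ : 0 < r₀) (hf : ContinuousOn f (Icc 0 r₀))
    (hw : ContDiffOn ℝ 2 w (Icc 0 r₀))
    (hode : ∀ r ∈ Ioc 0 r₀, derivWithin (derivWithin w (Icc 0 r₀)) (Icc 0 r₀) r
        + derivWithin (fun s => w s / s) (Icc 0 r₀) r = f r)
    (hr : r ∈ Icc 0 r₀) :
    |derivWithin (derivWithin w (Icc 0 r₀)) (Icc 0 r₀) r|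
      ≤ 4 / 3 * sSup ((fun ρ => |f ρ|) '' Icc 0 r) := by
  rcases hr.1.eq_or_lt with rfl | hr0
  · have hU : UniqueDiffOn ℝ (Icc 0 r₀) := uniqueDiffOn_Icc hr₀
    have hw'' : ContinuousOn (derivWithin (derivWithin w (Icc 0 r₀)) (Icc 0 r₀)) (Icc 0 r₀) :=
      ((hw.derivWithin hU (m := 1) (by norm_num)).derivWithin hU (m := 0)
        (by norm_num)).continuousOn
    have hlim : Tendsto (fun r => |derivWithin (derivWithin w (Icc 0 r₀)) (Icc 0 r₀) r|) (𝓝[>] 0)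
        (𝓝 |derivWithin (derivWithin w (Icc 0 r₀)) (Icc 0 r₀) 0|) :=
      ((hw'' 0 hr).mono_of_mem_nhdsWithin (Icc_mem_nhdsGT hr₀)).abs
    have hM : Tendsto (fun r => sSup ((fun ρ => |f ρ|) '' Icc 0 r)) (𝓝[>] 0) (𝓝 |f 0|) :=
      (tendsto_sSup_image_Icc_nhdsGE ((hf.abs 0 hr).mono_of_mem_nhdsWithin
        (Icc_mem_nhdsGE hr₀))).mono_left (nhdsWithin_mono _ Ioi_subset_Ici_self)
    have hle := le_of_tendsto_of_tendsto hlim (hM.const_mul (4 / 3)) <| by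
      filter_upwards [Ioc_mem_nhdsGT hr₀] with r hr
      exact abs_derivWithin_derivWithin_le_of_ode_of_pos hf hw hode hr
    rwa [Icc_self, image_singleton, csSup_singleton]
  · exact abs_derivWithin_derivWithin_le_of_ode_of_pos hf hw hode ⟨hr0, hr.2⟩

end SingularODE

theorem singular_ode_second_derivative_bound_general (r₀ : ℝ) (hr₀ : 0 < r₀) (f w : ℝ → ℝ)
    (hf0 : ContinuousOn f (Set.Icc 0 r₀))
    (hw : ContDiffOn ℝ 2 w (Set.Icc 0 r₀))
    (hode : ∀ r ∈ Set.Ioc (0:ℝ) r₀,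
      derivWithin (fun s => derivWithin w (Set.Icc 0 r₀) s) (Set.Icc 0 r₀) r
        + derivWithin (fun s => w s / s) (Set.Icc 0 r₀) r = f r) :
    (∀ r ∈ Set.Icc (0:ℝ) r₀,
      |derivWithin (fun s => derivWithin w (Set.Icc 0 r₀) s) (Set.Icc 0 r₀) r|
        ≤ (4/3) * sSup ((fun ρ => |f ρ|) '' Set.Icc 0 r)) ∧
    (∀ r ∈ Set.Icc (0:ℝ) r₀,
      |derivWithin w (Set.Icc 0 r₀) r|
        ≤ |derivWithin w (Set.Icc 0 r₀) r₀|
            + (4/3) * r₀ * sSup ((fun ρ => |f ρ|) '' Set.Icc 0 r₀)) := by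
  refine ⟨fun r hr => abs_derivWithin_derivWithin_le_of_ode hr₀ hf0 hw hode hr, fun r hr => ?_⟩
  have hr₀I : r₀ ∈ Icc 0 r₀ := right_mem_Icc.2 hr₀.le
  set M₀ := sSup ((fun ρ => |f ρ|) '' Icc 0 r₀)
  have hM₀ : 0 ≤ M₀ := (abs_nonneg _).trans (hf0.abs.le_sSup_image_Icc (left_mem_Icc.2 hr₀.le))
  have hbound : ∀ x ∈ Icc 0 r₀,
      ‖derivWithin (derivWithin w (Icc 0 r₀)) (Icc 0 r₀) x‖ ≤ 4 / 3 * M₀ :=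
    fun x hx => (abs_derivWithin_derivWithin_le_of_ode hr₀ hf0 hw hode hx).trans <| by
      gcongr
      refine csSup_le ((nonempty_Icc.2 hx.1).image _) ?_
      rintro _ ⟨ρ, hρ, rfl⟩
      exact hf0.abs.le_sSup_image_Icc ⟨hρ.1, hρ.2.trans hx.2⟩
  have hw'd : DifferentiableOn ℝ (derivWithin w (Icc 0 r₀)) (Icc 0 r₀) :=
    (hw.derivWithin (uniqueDiffOn_Icc hr₀) (m := 1) (by norm_num)).differentiableOn one_ne_zero
  have hmvt := (convex_Icc 0 r₀).norm_image_sub_le_of_norm_derivWithin_le hw'd hbound hr hr₀I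
  rw [Real.norm_eq_abs, Real.norm_eq_abs, abs_of_nonneg (sub_nonneg.2 hr.2)] at hmvt
  have htri := abs_sub_abs_le_abs_sub (derivWithin w (Icc 0 r₀) r) (derivWithin w (Icc 0 r₀) r₀)
  rw [abs_sub_comm] at htri
  nlinarith [hr.1]

/-- **Uniform second-derivative bound for a singular ODE.** If `w ∈ C²([0,r₀])` solves
`w'' + (w/r)' = f` on `(0,r₀]` with `f ∈ C⁰([0,r₀]) ∩ C¹((0,r₀])`, then
`|w''(r)| ≤ (4/3)·sup_{[0,r]} |f|`, and consequently
`|w'(r)| ≤ |w'(r₀)| + (4/3)·r₀·sup_{[0,r₀]} |f|`. -/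
theorem singular_ode_second_derivative_bound (r₀ : ℝ) (hr₀ : 0 < r₀) (f w : ℝ → ℝ)
    (hf0 : ContinuousOn f (Set.Icc 0 r₀))
    (hf1 : ContDiffOn ℝ 1 f (Set.Ioc 0 r₀))
    (hw : ContDiffOn ℝ 2 w (Set.Icc 0 r₀))
    (hode : ∀ r ∈ Set.Ioc (0:ℝ) r₀,
      derivWithin (fun s => derivWithin w (Set.Icc 0 r₀) s) (Set.Icc 0 r₀) r
        + derivWithin (fun s => w s / s) (Set.Icc 0 r₀) r = f r) :
    (∀ r ∈ Set.Icc (0:ℝ) r₀,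
      |derivWithin (fun s => derivWithin w (Set.Icc 0 r₀) s) (Set.Icc 0 r₀) r|
        ≤ (4/3) * sSup ((fun ρ => |f ρ|) '' Set.Icc 0 r)) ∧
    (∀ r ∈ Set.Icc (0:ℝ) r₀,
      |derivWithin w (Set.Icc 0 r₀) r|
        ≤ |derivWithin w (Set.Icc 0 r₀) r₀|
            + (4/3) * r₀ * sSup ((fun ρ => |f ρ|) '' Set.Icc 0 r₀)) :=
  singular_ode_second_derivative_bound_general r₀ hr₀ f w hf0 hw hode
end
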